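/- Let p be an odd prime, α a quadratic non-residue mod p, and E₃ = ⟨x,y,z,n | x^{p²}=y^p=z^{p²}=n^p=1, z^p=x^{αp}n, [x,z]=yn, [x,y]=x^p, [y,z]=[x,n]=[y,n]=[z,n]=1⟩. Then Z(E₃) = ⟨x^p, n⟩, the subgroup core(⟨x,y⟩) equals ⟨x^p, y⟩, and core(⟨x,y⟩) ∩ core(⟨y,z⟩) = {1}. -/

import Mathlib

set_option linter.unusedSectionVars false


/-- The minimal degree of a finite group `G`: the least `n` such that `G` embeds in `Sym(n)`. -/
noncomputable def minDeg (G : Type*) [Group G] : ℕ :=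
  sInf {n | ∃ f : G →* Equiv.Perm (Fin n), Function.Injective f}

/-- Commutator `[a,b] = a⁻¹b⁻¹ab`. -/
def comm' {G : Type*} [Group G] (a b : G) : G := a⁻¹ * b⁻¹ * a * b

namespace E3defs

/-- Free generators: `0 ↦ x`, `1 ↦ y`, `2 ↦ z`, `3 ↦ n`. -/
abbrev x : FreeGroup (Fin 4) := FreeGroup.of 0
abbrev y : FreeGroup (Fin 4) := FreeGroup.of 1
abbrev z : FreeGroup (Fin 4) := FreeGroup.of 2
abbrev n : FreeGroup (Fin 4) := FreeGroup.of 3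

/-- Relations of `E₃ = ⟨x,y,z,n | x^{p²}=y^p=z^{p²}=n^p=1, z^p=x^{αp}n, [x,z]=yn, [x,y]=x^p,
[y,z]=[x,n]=[y,n]=[z,n]=1⟩`. -/
def rels (p α : ℕ) : Set (FreeGroup (Fin 4)) :=
  {x ^ (p ^ 2), y ^ p, z ^ (p ^ 2), n ^ p,
   z ^ p * (x ^ (α * p) * n)⁻¹,
   comm' x z * (y * n)⁻¹,
   comm' x y * (x ^ p)⁻¹,
   comm' y z, comm' x n, comm' y n, comm' z n}

/-- Free generators of `G₃`: `0 ↦ x`, `1 ↦ y`, `2 ↦ z`. -/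
abbrev x3 : FreeGroup (Fin 3) := FreeGroup.of 0
abbrev y3 : FreeGroup (Fin 3) := FreeGroup.of 1
abbrev z3 : FreeGroup (Fin 3) := FreeGroup.of 2

/-- Relations of `G₃ = ⟨x,y,z | x^{p²}=y^p=z^{p²}=1, z^p=x^{αp}, [x,y]=x^p, [x,z]=y, [y,z]=1⟩`. -/
def relsG3 (p α : ℕ) : Set (FreeGroup (Fin 3)) :=
  {x3 ^ (p ^ 2), y3 ^ p, z3 ^ (p ^ 2),
   z3 ^ p * (x3 ^ (α * p))⁻¹,
   comm' x3 y3 * (x3 ^ p)⁻¹,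
   comm' x3 z3 * y3⁻¹,
   comm' y3 z3}

end E3defs

/-- The group `E₃` of order `p⁵`. -/
abbrev E3 (p α : ℕ) := PresentedGroup (E3defs.rels p α)

/-- The group `G₃` of order `p⁴`. -/
abbrev G3 (p α : ℕ) := PresentedGroup (E3defs.relsG3 p α)

/-- Generators of `E₃`. -/
def xE (p α : ℕ) : E3 p α := PresentedGroup.of 0
def yE (p α : ℕ) : E3 p α := PresentedGroup.of 1
def zE (p α : ℕ) : E3 p α := PresentedGroup.of 2
def nE (p α : ℕ) : E3 p α := PresentedGroup.of 3


namespace E3proof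

/-- Concrete model of `E₃`: `(a,b,c,d)` represents `x^a y^b z^c n^d`. -/
structure Mdl (p α : ℕ) where
  a : ZMod (p ^ 2)
  b : ZMod p
  c : ZMod p
  d : ZMod p

namespace Mdl

variable {p α : ℕ} [Fact p.Prime] [Fact (Odd p)]

instance : NeZero p := ⟨(Fact.out (p := p.Prime)).ne_zero⟩
instance : NeZero (p ^ 2) := ⟨pow_ne_zero 2 (Fact.out (p := p.Prime)).ne_zero⟩

theorem p_odd : Odd p := Fact.out
theorem p_prime : p.Prime := Fact.out

/-- lift `ZMod p → ZMod p²`, multiplied by `p`. -/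
def lp (t : ZMod p) : ZMod (p ^ 2) := (p : ZMod (p ^ 2)) * (t.val : ZMod (p ^ 2))

/-- reduction `ZMod p² → ZMod p`. -/
def dn (a : ZMod (p ^ 2)) : ZMod p :=
  ZMod.castHom (dvd_pow_self p two_ne_zero) (ZMod p) a

theorem pp_zero : (p : ZMod (p ^ 2)) * (p : ZMod (p ^ 2)) = 0 := by
  rw [← Nat.cast_mul, ← pow_two, ZMod.natCast_self]

theorem lp_natCast (k : ℕ) : lp (k : ZMod p) = (p : ZMod (p ^ 2)) * k := by
  unfold lp
  have h : ((k : ZMod p).val : ZMod (p ^ 2)) = (k : ZMod (p ^ 2)) - p * (k / p : ℕ) := by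
    have : (k : ZMod p).val = k % p := ZMod.val_natCast p k
    rw [this]
    have hk : k % p + p * (k / p) = k := Nat.mod_add_div k p
    calc ((k % p : ℕ) : ZMod (p ^ 2)) = ((k % p + p * (k / p) : ℕ) : ZMod (p^2)) - p * (k/p : ℕ) := by
          push_cast; ring
    _ = (k : ZMod (p^2)) - p * (k/p : ℕ) := by rw [hk]
  rw [h, mul_sub]
  rw [show (p : ZMod (p^2)) * ((p : ZMod (p^2)) * (k / p : ℕ)) = ((p:ZMod (p^2)) * p) * (k/p : ℕ) by ring,
    pp_zero, zero_mul, sub_zero]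

theorem lp_add (t u : ZMod p) : lp (t + u) = lp t + lp u := by
  have h1 : lp (t + u) = lp ((t.val + u.val : ℕ) : ZMod p) := by
    congr 1; push_cast [ZMod.natCast_val]; simp [ZMod.natCast_val, ZMod.cast_id]
  rw [h1, lp_natCast]
  unfold lp
  push_cast
  ring

theorem lp_zero : lp (0 : ZMod p) = 0 := by simp [lp]

theorem lp_neg (t : ZMod p) : lp (-t) = - lp t := by
  have := lp_add t (-t)
  simp [lp_zero] at this
  exact eq_neg_of_add_eq_zero_right this.symm

theorem dn_lp (t : ZMod p) : dn (lp t) = 0 := by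
  unfold dn lp
  rw [map_mul, map_natCast, ZMod.natCast_self, zero_mul]

theorem dn_add (a b : ZMod (p ^ 2)) : dn (a + b) = dn a + dn b := map_add _ _ _
theorem dn_zero : dn (0 : ZMod (p ^ 2)) = 0 := map_zero _
theorem dn_natCast (k : ℕ) : dn ((k : ℕ) : ZMod (p ^ 2)) = k := map_natCast _ k
theorem dn_one : dn (1 : ZMod (p ^ 2)) = 1 := map_one _
theorem dn_neg (a : ZMod (p ^ 2)) : dn (-a) = - dn a := map_neg _ _

theorem lp_inj {t u : ZMod p} (h : lp t = lp u) : t = u := by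
  have h1 : ∀ v : ZMod p, lp v = ((p * v.val : ℕ) : ZMod (p ^ 2)) := by
    intro v; unfold lp; push_cast; ring
  rw [h1, h1] at h
  have hv : ∀ v : ZMod p, p * v.val < p ^ 2 := by
    intro v
    have := ZMod.val_lt v
    have hp0 : 0 < p := Nat.pos_of_ne_zero (NeZero.ne p)
    calc p * v.val < p * p := by exact (Nat.mul_lt_mul_left hp0).mpr this
    _ = p ^ 2 := (pow_two p).symm
  have this := congrArg ZMod.val h
  rw [ZMod.val_cast_of_lt (hv t), ZMod.val_cast_of_lt (hv u)] at this
  have hp0 : 0 < p := Nat.pos_of_ne_zero (NeZero.ne p)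
  have := Nat.eq_of_mul_eq_mul_left hp0 this
  exact ZMod.val_injective _ this

theorem dn_eq_zero_iff {a : ZMod (p ^ 2)} : dn a = 0 ↔ ∃ t : ZMod p, a = lp t := by
  constructor
  · intro h
    have hval : ((a.val : ℕ) : ZMod p) = 0 := by
      have h2 : dn a = ((a.val : ℕ) : ZMod p) := by
        unfold dn
        rw [ZMod.castHom_apply, ZMod.natCast_val]
      rw [← h2]; exact h
    have hdvd : p ∣ a.val := (ZMod.natCast_eq_zero_iff _ _).mp hval
    obtain ⟨k, hk⟩ := hdvd
    refine ⟨(k : ZMod p), ?_⟩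
    rw [lp_natCast]
    have ha : ((a.val : ℕ) : ZMod (p ^ 2)) = a := by rw [ZMod.natCast_val, ZMod.cast_id]
    rw [← ha, hk]; push_cast; ring
  · rintro ⟨t, rfl⟩; exact dn_lp t

/-- carry bit of addition in `ZMod p`. -/
def carry (c c' : ZMod p) : ℕ := if p ≤ c.val + c'.val then 1 else 0

theorem carry_eq (c c' : ZMod p) : (c + c').val + p * carry c c' = c.val + c'.val := by
  rw [ZMod.val_add, carry]
  have h1 := ZMod.val_lt c
  have h2 := ZMod.val_lt c'
  split <;> rename_i h
  · rw [Nat.mod_eq_sub_mod h, Nat.mod_eq_of_lt (by omega)]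
    omega
  · rw [Nat.mod_eq_of_lt (by omega)]
    omega

theorem carry_le (c c' : ZMod p) : carry c c' ≤ 1 := by unfold carry; split <;> omega

theorem carry_assoc (c₁ c₂ c₃ : ZMod p) :
    carry c₁ c₂ + carry (c₁ + c₂) c₃ = carry c₂ c₃ + carry c₁ (c₂ + c₃) := by
  have h1 := carry_eq c₁ c₂
  have h2 := carry_eq (c₁ + c₂) c₃
  have h3 := carry_eq c₂ c₃
  have h4 := carry_eq c₁ (c₂ + c₃)
  rw [add_assoc] at h2
  rw [← add_assoc] at h4
  have h5 : (c₁ + (c₂ + c₃)).val = (c₁ + c₂ + c₃).val := by rw [add_assoc]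
  have hp0 : 0 < p := Nat.pos_of_ne_zero (NeZero.ne p)
  have key : p * (carry c₁ c₂ + carry (c₁ + c₂) c₃) = p * (carry c₂ c₃ + carry c₁ (c₂ + c₃)) := by
    rw [Nat.mul_add, Nat.mul_add]
    omega
  exact Nat.eq_of_mul_eq_mul_left hp0 key

theorem carry_zero_left (c : ZMod p) : carry 0 c = 0 := by
  unfold carry
  have := ZMod.val_lt c
  simp only [ZMod.val_zero, zero_add]
  split <;> omega

theorem carry_zero_right (c : ZMod p) : carry c 0 = 0 := by
  unfold carry
  have := ZMod.val_lt c
  simp only [ZMod.val_zero, add_zero]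
  split <;> omega

variable (α) in
instance : One (Mdl p α) := ⟨⟨0, 0, 0, 0⟩⟩

instance : Mul (Mdl p α) :=
  ⟨fun m m' =>
    ⟨m.a + m'.a + lp (m.c * dn m'.a * (dn m'.a - 1) * (2 : ZMod p)⁻¹ - dn m'.a * m.b
        + (α : ZMod p) * ((carry m.c m'.c : ℕ) : ZMod p)),
     m.b + m'.b - m.c * dn m'.a,
     m.c + m'.c,
     m.d + m'.d - m.c * dn m'.a + ((carry m.c m'.c : ℕ) : ZMod p)⟩⟩

instance : Inv (Mdl p α) :=
  ⟨fun m =>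
    ⟨-m.a - lp ((-m.c) * dn m.a * (dn m.a - 1) * (2 : ZMod p)⁻¹
        - dn m.a * ((-m.c) * dn m.a - m.b) + (α : ZMod p) * ((carry (-m.c) m.c : ℕ) : ZMod p)),
     (-m.c) * dn m.a - m.b,
     -m.c,
     (-m.c) * dn m.a - m.d - ((carry (-m.c) m.c : ℕ) : ZMod p)⟩⟩

theorem mul_a (m m' : Mdl p α) : (m * m').a =
    m.a + m'.a + lp (m.c * dn m'.a * (dn m'.a - 1) * (2 : ZMod p)⁻¹ - dn m'.a * m.b
      + (α : ZMod p) * ((carry m.c m'.c : ℕ) : ZMod p)) := rfl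
theorem mul_b (m m' : Mdl p α) : (m * m').b = m.b + m'.b - m.c * dn m'.a := rfl
theorem mul_c (m m' : Mdl p α) : (m * m').c = m.c + m'.c := rfl
theorem mul_d (m m' : Mdl p α) : (m * m').d =
    m.d + m'.d - m.c * dn m'.a + ((carry m.c m'.c : ℕ) : ZMod p) := rfl

theorem inv_a (m : Mdl p α) : (m⁻¹).a = -m.a - lp ((-m.c) * dn m.a * (dn m.a - 1) * (2 : ZMod p)⁻¹
    - dn m.a * ((-m.c) * dn m.a - m.b) + (α : ZMod p) * ((carry (-m.c) m.c : ℕ) : ZMod p)) := rfl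
theorem inv_b (m : Mdl p α) : (m⁻¹).b = (-m.c) * dn m.a - m.b := rfl
theorem inv_c (m : Mdl p α) : (m⁻¹).c = -m.c := rfl
theorem inv_d (m : Mdl p α) : (m⁻¹).d = (-m.c) * dn m.a - m.d - ((carry (-m.c) m.c : ℕ) : ZMod p) := rfl

theorem one_a : (1 : Mdl p α).a = 0 := rfl
theorem one_b : (1 : Mdl p α).b = 0 := rfl
theorem one_c : (1 : Mdl p α).c = 0 := rfl
theorem one_d : (1 : Mdl p α).d = 0 := rfl

theorem ext_iff' {m m' : Mdl p α} : m = m' ↔ m.a = m'.a ∧ m.b = m'.b ∧ m.c = m'.c ∧ m.d = m'.d := by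
  constructor
  · rintro rfl; exact ⟨rfl, rfl, rfl, rfl⟩
  · rcases m with ⟨a, b, c, d⟩; rcases m' with ⟨a', b', c', d'⟩
    rintro ⟨h1, h2, h3, h4⟩
    simp_all

theorem two_inv_mul : (2 : ZMod p) * (2 : ZMod p)⁻¹ = 1 := by
  have hodd := p_odd (p := p)
  have h2 : (2 : ZMod p) ≠ 0 := by
    intro h
    have h2' : ((2 : ℕ) : ZMod p) = 0 := by exact_mod_cast h
    rw [ZMod.natCast_eq_zero_iff] at h2'
    have hple := Nat.le_of_dvd (by norm_num) h2'
    have hge := (p_prime (p := p)).two_le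
    rcases hodd with ⟨k, hk⟩
    omega
  exact mul_inv_cancel₀ h2

theorem dn_mul_a (m m' : Mdl p α) : dn ((m * m').a) = dn m.a + dn m'.a := by
  rw [mul_a, dn_add, dn_add, dn_lp, add_zero]

theorem mul_assoc' (u v w : Mdl p α) : u * v * w = u * (v * w) := by
  have hs : ((carry u.c v.c : ℕ) : ZMod p) + ((carry (u.c + v.c) w.c : ℕ) : ZMod p)
      = ((carry v.c w.c : ℕ) : ZMod p) + ((carry u.c (v.c + w.c) : ℕ) : ZMod p) := by
    have := carry_assoc u.c v.c w.c
    exact_mod_cast congrArg (Nat.cast : ℕ → ZMod p) this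
  have hi := two_inv_mul (p := p)
  rw [ext_iff']
  refine ⟨?_, ?_, ?_, ?_⟩
  · simp only [mul_a, mul_b, mul_c, dn_add, dn_lp, add_zero]
    have hlp : lp (u.c * dn v.a * (dn v.a - 1) * (2 : ZMod p)⁻¹ - dn v.a * u.b
          + (α : ZMod p) * ((carry u.c v.c : ℕ) : ZMod p))
        + lp ((u.c + v.c) * dn w.a * (dn w.a - 1) * (2 : ZMod p)⁻¹
          - dn w.a * (u.b + v.b - u.c * dn v.a)
          + (α : ZMod p) * ((carry (u.c + v.c) w.c : ℕ) : ZMod p))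
        = lp (v.c * dn w.a * (dn w.a - 1) * (2 : ZMod p)⁻¹ - dn w.a * v.b
          + (α : ZMod p) * ((carry v.c w.c : ℕ) : ZMod p))
        + lp (u.c * (dn v.a + dn w.a) * (dn v.a + dn w.a - 1) * (2 : ZMod p)⁻¹
          - (dn v.a + dn w.a) * u.b
          + (α : ZMod p) * ((carry u.c (v.c + w.c) : ℕ) : ZMod p)) := by
      rw [← lp_add, ← lp_add]
      exact congrArg lp (by linear_combination (α : ZMod p) * hs - u.c * dn v.a * dn w.a * hi)
    linear_combination hlp
  · simp only [mul_a, mul_b, mul_c, dn_add, dn_lp, add_zero]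
    ring
  · simp only [mul_c]
    ring
  · simp only [mul_a, mul_d, mul_b, mul_c, dn_add, dn_lp, add_zero]
    linear_combination hs

theorem one_mul' (m : Mdl p α) : (1 : Mdl p α) * m = m := by
  rw [ext_iff']
  refine ⟨?_, ?_, ?_, ?_⟩ <;>
    simp only [mul_a, mul_b, mul_c, mul_d, one_a, one_b, one_c, one_d, carry_zero_left,
      Nat.cast_zero, mul_zero, zero_mul, zero_sub, sub_zero, add_zero, zero_add, neg_zero, lp_zero]

theorem inv_mul' (m : Mdl p α) : m⁻¹ * m = 1 := by
  rw [ext_iff']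
  simp only [mul_a, mul_b, mul_c, mul_d, inv_a, inv_b, inv_c, inv_d, one_a, one_b, one_c, one_d]
  refine ⟨by ring, by ring, by ring, by ring⟩

instance : Group (Mdl p α) :=
  Group.ofLeftAxioms mul_assoc' one_mul' inv_mul'

@[simp] theorem mk_a (a b c d) : (Mdl.mk (p := p) (α := α) a b c d).a = a := rfl
@[simp] theorem mk_b (a b c d) : (Mdl.mk (p := p) (α := α) a b c d).b = b := rfl
@[simp] theorem mk_c (a b c d) : (Mdl.mk (p := p) (α := α) a b c d).c = c := rfl
@[simp] theorem mk_d (a b c d) : (Mdl.mk (p := p) (α := α) a b c d).d = d := rfl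

def X : Mdl p α := ⟨1, 0, 0, 0⟩
def Y : Mdl p α := ⟨0, 1, 0, 0⟩
def Z : Mdl p α := ⟨0, 0, 1, 0⟩
def N : Mdl p α := ⟨0, 0, 0, 1⟩

theorem p_one_lt : 1 < p := (p_prime (p := p)).one_lt

theorem val_one' : (1 : ZMod p).val = 1 := by
  rw [ZMod.val_one_eq_one_mod]
  exact Nat.mod_eq_of_lt (p_one_lt (p := p))

theorem carry_small {k : ℕ} (hk : k + 1 < p) : carry ((k : ℕ) : ZMod p) 1 = 0 := by
  unfold carry
  rw [ZMod.val_natCast, val_one']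
  have : k % p ≤ k := Nat.mod_le _ _
  split <;> omega

theorem X_pow (k : ℕ) : (X : Mdl p α) ^ k = ⟨(k : ZMod (p ^ 2)), 0, 0, 0⟩ := by
  induction k with
  | zero => simp only [pow_zero, Nat.cast_zero]; rfl
  | succ k ih =>
    rw [pow_succ, ih, ext_iff']
    simp only [mul_a, mul_b, mul_c, mul_d, X, mk_a, mk_b, mk_c, mk_d, dn_one,
      carry_zero_left, Nat.cast_zero, mul_zero, zero_mul, mul_one, sub_zero, zero_sub,
      add_zero, zero_add, neg_zero, lp_zero]
    refine ⟨by push_cast; ring, trivial, trivial, trivial⟩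

theorem Y_pow (k : ℕ) : (Y : Mdl p α) ^ k = ⟨0, (k : ZMod p), 0, 0⟩ := by
  induction k with
  | zero => simp only [pow_zero, Nat.cast_zero]; rfl
  | succ k ih =>
    rw [pow_succ, ih, ext_iff']
    simp only [mul_a, mul_b, mul_c, mul_d, Y, mk_a, mk_b, mk_c, mk_d, dn_zero,
      carry_zero_left, Nat.cast_zero, mul_zero, zero_mul, mul_one, sub_zero, zero_sub,
      add_zero, zero_add, neg_zero, lp_zero]
    refine ⟨trivial, by push_cast; ring, trivial, trivial⟩

theorem N_pow (k : ℕ) : (N : Mdl p α) ^ k = ⟨0, 0, 0, (k : ZMod p)⟩ := by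
  induction k with
  | zero => simp only [pow_zero, Nat.cast_zero]; rfl
  | succ k ih =>
    rw [pow_succ, ih, ext_iff']
    simp only [mul_a, mul_b, mul_c, mul_d, N, mk_a, mk_b, mk_c, mk_d, dn_zero,
      carry_zero_left, Nat.cast_zero, mul_zero, zero_mul, mul_one, sub_zero, zero_sub,
      add_zero, zero_add, neg_zero, lp_zero]
    refine ⟨trivial, trivial, trivial, by push_cast; ring⟩

theorem cel_mul (t d : ZMod p) (m : Mdl p α) :
    (⟨lp t, 0, 0, d⟩ : Mdl p α) * m = ⟨lp t + m.a, m.b, m.c, d + m.d⟩ := by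
  rw [ext_iff']
  simp only [mul_a, mul_b, mul_c, mul_d, mk_a, mk_b, mk_c, mk_d, carry_zero_left,
    Nat.cast_zero, mul_zero, zero_mul, sub_zero, zero_sub, add_zero, zero_add, neg_zero, lp_zero]
  refine ⟨trivial, trivial, trivial, trivial⟩

theorem mul_cel (m : Mdl p α) (t d : ZMod p) :
    m * (⟨lp t, 0, 0, d⟩ : Mdl p α) = ⟨m.a + lp t, m.b, m.c, m.d + d⟩ := by
  rw [ext_iff']
  simp only [mul_a, mul_b, mul_c, mul_d, mk_a, mk_b, mk_c, mk_d, carry_zero_right, dn_lp,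
    Nat.cast_zero, mul_zero, zero_mul, sub_zero, zero_sub, add_zero, zero_add, neg_zero, lp_zero]
  refine ⟨trivial, trivial, trivial, trivial⟩

theorem cel_central (t d : ZMod p) (m : Mdl p α) :
    (⟨lp t, 0, 0, d⟩ : Mdl p α) * m = m * ⟨lp t, 0, 0, d⟩ := by
  rw [cel_mul, mul_cel, ext_iff']
  refine ⟨by ring, by ring, by ring, by ring⟩

theorem cel_pow (t d : ZMod p) (k : ℕ) :
    (⟨lp t, 0, 0, d⟩ : Mdl p α) ^ k = ⟨lp ((k : ZMod p) * t), 0, 0, (k : ZMod p) * d⟩ := by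
  induction k with
  | zero =>
    simp only [pow_zero, Nat.cast_zero, zero_mul, lp_zero]; rfl
  | succ k ih =>
    rw [pow_succ, ih, mul_cel, ext_iff']
    simp only [mk_a, mk_b, mk_c, mk_d]
    refine ⟨by rw [← lp_add]; congr 1; push_cast; ring, trivial, trivial, by push_cast; ring⟩

theorem Z_pow_lt {k : ℕ} (hk : k < p) : (Z : Mdl p α) ^ k = ⟨0, 0, (k : ZMod p), 0⟩ := by
  induction k with
  | zero => simp only [pow_zero, Nat.cast_zero]; rfl
  | succ k ih =>
    rw [pow_succ, ih (by omega), ext_iff']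
    simp only [mul_a, mul_b, mul_c, mul_d, Z, mk_a, mk_b, mk_c, mk_d, dn_zero,
      carry_small hk, Nat.cast_zero, mul_zero, zero_mul, mul_one, sub_zero, zero_sub,
      add_zero, zero_add, neg_zero, lp_zero]
    refine ⟨trivial, trivial, by push_cast; ring, trivial⟩

theorem Z_pow_p : (Z : Mdl p α) ^ p = ⟨lp (α : ZMod p), 0, 0, 1⟩ := by
  have hp1 : 1 ≤ p := le_of_lt (p_one_lt (p := p))
  have key : (Z : Mdl p α) ^ (p - 1 + 1) = Z ^ p := by rw [Nat.sub_add_cancel hp1]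
  rw [← key, pow_succ, Z_pow_lt (show p - 1 < p by omega), ext_iff']
  have hcar : carry (((p - 1 : ℕ) : ℕ) : ZMod p) 1 = 1 := by
    unfold carry
    rw [ZMod.val_natCast, val_one', Nat.mod_eq_of_lt (by omega)]
    split <;> omega
  simp only [mul_a, mul_b, mul_c, mul_d, Z, mk_a, mk_b, mk_c, mk_d, dn_zero, hcar,
    Nat.cast_one, mul_zero, zero_mul, mul_one, sub_zero, zero_sub, add_zero, zero_add,
    neg_zero, lp_zero]
  refine ⟨trivial, trivial, ?_, trivial⟩
  have : (((p - 1 : ℕ) : ℕ) : ZMod p) + 1 = ((p : ℕ) : ZMod p) := by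
    push_cast
    rw [Nat.cast_sub hp1]
    push_cast
    ring
  rw [this, ZMod.natCast_self]

def toProd : Mdl p α ≃ (ZMod (p ^ 2) × ZMod p × ZMod p × ZMod p) where
  toFun m := (m.a, m.b, m.c, m.d)
  invFun q := ⟨q.1, q.2.1, q.2.2.1, q.2.2.2⟩
  left_inv m := rfl
  right_inv q := rfl

instance : Finite (Mdl p α) := Finite.of_equiv _ (toProd (p := p) (α := α)).symm

theorem natCast_val_self {n : ℕ} [NeZero n] (u : ZMod n) : ((u.val : ℕ) : ZMod n) = u := by
  rw [ZMod.natCast_val, ZMod.cast_id]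

theorem lp_one : lp (1 : ZMod p) = (p : ZMod (p ^ 2)) := by
  unfold lp
  rw [val_one', Nat.cast_one, mul_one]

theorem X_pow_p : (X : Mdl p α) ^ p = ⟨lp (1 : ZMod p), 0, 0, 0⟩ := by
  rw [X_pow, lp_one]

theorem Xp_pow (k : ℕ) : ((X : Mdl p α) ^ p) ^ k = ⟨lp ((k : ℕ) : ZMod p), 0, 0, 0⟩ := by
  rw [← pow_mul, X_pow, ext_iff']
  refine ⟨?_, rfl, rfl, rfl⟩
  rw [mk_a, mk_a, lp_natCast]
  push_cast
  ring

theorem carry_comm (c c' : ZMod p) : carry c c' = carry c' c := by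
  unfold carry; rw [Nat.add_comm]

/-- the subgroup `⟨x^p, n⟩ = {(lp t, 0, 0, d)}`. -/
theorem mem_closure_XpN (m : Mdl p α) (ha : dn m.a = 0) (hb : m.b = 0) (hc : m.c = 0) :
    m ∈ Subgroup.closure ({(X : Mdl p α) ^ p, N} : Set (Mdl p α)) := by
  obtain ⟨t, ht⟩ := dn_eq_zero_iff.mp ha
  have hXp : ((X : Mdl p α) ^ p) ^ t.val ∈ Subgroup.closure ({(X : Mdl p α) ^ p, N} : Set (Mdl p α)) :=
    pow_mem (Subgroup.subset_closure (by simp)) _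
  have hN : (N : Mdl p α) ^ m.d.val ∈ Subgroup.closure ({(X : Mdl p α) ^ p, N} : Set (Mdl p α)) :=
    pow_mem (Subgroup.subset_closure (by simp)) _
  have key : m = ((X : Mdl p α) ^ p) ^ t.val * (N : Mdl p α) ^ m.d.val := by
    rw [Xp_pow, N_pow, natCast_val_self, natCast_val_self, cel_mul, ext_iff']
    exact ⟨by rw [mk_a, mk_a, ht, add_zero], by rw [mk_b, mk_b, hb], by rw [mk_c, mk_c, hc],
      by rw [mk_d, mk_d, zero_add]⟩
  rw [key]
  exact mul_mem hXp hN

theorem center_eq : Subgroup.center (Mdl p α) =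
    Subgroup.closure ({(X : Mdl p α) ^ p, N} : Set (Mdl p α)) := by
  apply le_antisymm
  · intro m hm
    rw [Subgroup.mem_center_iff] at hm
    have hX := hm X
    have hZ := hm Z
    -- c = 0 from the b-component of `X * m = m * X`
    have hc : m.c = 0 := by
      have hb := congrArg Mdl.b hX
      simp only [mul_b, X, mk_a, mk_b, mk_c, dn_one, mul_one, zero_add, zero_mul, sub_zero,
        add_zero] at hb
      linear_combination hb
    -- dn m.a = 0 from the b-component of `Z * m = m * Z`
    have hdn : dn m.a = 0 := by
      have hb := congrArg Mdl.b hZ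
      simp only [mul_b, Z, mk_a, mk_b, mk_c, dn_zero, mul_one, one_mul, zero_add, zero_mul,
        mul_zero, sub_zero, add_zero] at hb
      linear_combination -hb
    -- b = 0 from the a-component of `X * m = m * X`
    have hbb : m.b = 0 := by
      have ha := congrArg Mdl.a hX
      simp only [mul_a, X, mk_a, mk_b, mk_c, dn_one, mul_one, one_mul, sub_self, mul_zero,
        zero_mul, zero_sub, carry_zero_left, carry_zero_right, Nat.cast_zero, add_zero,
        lp_zero] at ha
      have h0 : lp (-m.b) = lp 0 := by rw [lp_zero]; linear_combination -ha
      have := lp_inj h0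
      simpa using this
    exact mem_closure_XpN m hdn hbb hc
  · rw [Subgroup.closure_le]
    rintro g hg
    simp only [Set.mem_insert_iff, Set.mem_singleton_iff] at hg
    rw [SetLike.mem_coe, Subgroup.mem_center_iff]
    rcases hg with rfl | rfl
    · intro m; rw [X_pow_p, cel_central]
    · intro m
      have : (N : Mdl p α) = ⟨lp 0, 0, 0, 1⟩ := by rw [lp_zero]; rfl
      rw [this, cel_central]

theorem X_a : (X : Mdl p α).a = 1 := rfl
theorem X_b : (X : Mdl p α).b = 0 := rfl
theorem X_c : (X : Mdl p α).c = 0 := rfl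
theorem X_d : (X : Mdl p α).d = 0 := rfl
theorem Y_a : (Y : Mdl p α).a = 0 := rfl
theorem Y_b : (Y : Mdl p α).b = 1 := rfl
theorem Y_c : (Y : Mdl p α).c = 0 := rfl
theorem Y_d : (Y : Mdl p α).d = 0 := rfl
theorem Z_a : (Z : Mdl p α).a = 0 := rfl
theorem Z_b : (Z : Mdl p α).b = 0 := rfl
theorem Z_c : (Z : Mdl p α).c = 1 := rfl
theorem Z_d : (Z : Mdl p α).d = 0 := rfl
theorem N_a : (N : Mdl p α).a = 0 := rfl
theorem N_b : (N : Mdl p α).b = 0 := rfl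
theorem N_c : (N : Mdl p α).c = 0 := rfl
theorem N_d : (N : Mdl p α).d = 1 := rfl

theorem val_neg_one' : (-1 : ZMod p).val = p - 1 := by
  have h1 : (-1 : ZMod p) = ((p - 1 : ℕ) : ZMod p) := by
    rw [Nat.cast_sub (le_of_lt (p_one_lt (p := p))), ZMod.natCast_self, Nat.cast_one, zero_sub]
  rw [h1, ZMod.val_natCast, Nat.mod_eq_of_lt (by have := p_one_lt (p := p); omega)]

theorem carry_neg_one_one : carry (-1 : ZMod p) (1 : ZMod p) = 1 := by
  unfold carry
  rw [val_one', val_neg_one']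
  have := p_one_lt (p := p)
  split <;> omega

theorem carry_one_neg_one : carry (1 : ZMod p) (-1 : ZMod p) = 1 := by
  rw [carry_comm]; exact carry_neg_one_one

variable (p α) in
/-- `⟨x,y⟩ = {(a,b,0,0)}` as a subgroup. -/
def SH : Subgroup (Mdl p α) where
  carrier := {m | m.c = 0 ∧ m.d = 0}
  one_mem' := ⟨rfl, rfl⟩
  mul_mem' := by
    rintro m m' ⟨hc, hd⟩ ⟨hc', hd'⟩
    refine ⟨?_, ?_⟩
    · rw [mul_c, hc, hc', add_zero]
    · rw [mul_d, hd, hd', hc, carry_zero_left]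
      push_cast
      ring
  inv_mem' := by
    rintro m ⟨hc, hd⟩
    refine ⟨?_, ?_⟩
    · rw [inv_c, hc, neg_zero]
    · rw [inv_d, hc, hd, neg_zero, carry_zero_left]
      push_cast
      ring

theorem mem_SH {m : Mdl p α} : m ∈ SH p α ↔ m.c = 0 ∧ m.d = 0 := Iff.rfl

theorem closure_XY : Subgroup.closure ({(X : Mdl p α), Y} : Set (Mdl p α)) = SH p α := by
  apply le_antisymm
  · rw [Subgroup.closure_le]
    rintro g hg
    simp only [Set.mem_insert_iff, Set.mem_singleton_iff] at hg
    rcases hg with rfl | rfl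
    · exact ⟨rfl, rfl⟩
    · exact ⟨rfl, rfl⟩
  · rintro m ⟨hc, hd⟩
    have key : m = (X : Mdl p α) ^ m.a.val * (Y : Mdl p α) ^ m.b.val := by
      rw [X_pow, Y_pow, natCast_val_self, natCast_val_self, ext_iff']
      refine ⟨?_, ?_, ?_, ?_⟩ <;>
        simp only [mul_a, mul_b, mul_c, mul_d, mk_a, mk_b, mk_c, mk_d, dn_zero, zero_mul,
          mul_zero, zero_sub, neg_zero, sub_zero, sub_self, carry_zero_left, carry_zero_right,
          Nat.cast_zero, add_zero, zero_add, lp_zero, hc, hd]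
    rw [key]
    exact mul_mem (pow_mem (Subgroup.subset_closure (by simp)) _)
      (pow_mem (Subgroup.subset_closure (by simp)) _)

variable (p α) in
/-- `⟨x^p, y⟩ = {(lp t, b, 0, 0)}` as a subgroup. -/
def K2 : Subgroup (Mdl p α) where
  carrier := {m | dn m.a = 0 ∧ m.c = 0 ∧ m.d = 0}
  one_mem' := ⟨dn_zero, rfl, rfl⟩
  mul_mem' := by
    rintro m m' ⟨ha, hc, hd⟩ ⟨ha', hc', hd'⟩
    refine ⟨?_, ?_, ?_⟩
    · rw [dn_mul_a, ha, ha', add_zero]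
    · rw [mul_c, hc, hc', add_zero]
    · rw [mul_d, hd, hd', hc, ha', carry_zero_left]
      push_cast
      ring
  inv_mem' := by
    rintro m ⟨ha, hc, hd⟩
    refine ⟨?_, ?_, ?_⟩
    · simp [inv_a, sub_eq_add_neg, dn_add, dn_neg, dn_lp, ha]
    · rw [inv_c, hc, neg_zero]
    · rw [inv_d, hc, hd, ha, neg_zero, carry_zero_left]
      push_cast
      ring

theorem mem_K2 {m : Mdl p α} : m ∈ K2 p α ↔ dn m.a = 0 ∧ m.c = 0 ∧ m.d = 0 := Iff.rfl

theorem K2_le_SH : K2 p α ≤ SH p α := fun _ h => ⟨h.2.1, h.2.2⟩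

theorem dn_inv_a (b : Mdl p α) : dn ((b⁻¹).a) = - dn b.a := by
  have h := dn_mul_a (b⁻¹) b
  rw [inv_mul', one_a, dn_zero] at h
  linear_combination -h

/-- `K2` is normal: the conjugate of any element of `K2` lies in `K2`. -/
theorem K2_conj (b m : Mdl p α) (hm : m ∈ K2 p α) : b * m * b⁻¹ ∈ K2 p α := by
  obtain ⟨ha, hc, hd⟩ := hm
  refine ⟨?_, ?_, ?_⟩
  · rw [dn_mul_a, dn_mul_a, dn_inv_a, ha]
    ring
  · rw [mul_c, mul_c, inv_c, hc]
    ring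
  · have h1 : (b * m).d = b.d := by
      rw [mul_d, hd, hc]
      obtain ⟨t, ht⟩ := dn_eq_zero_iff.mp ha
      rw [ht, dn_lp, carry_zero_right]
      push_cast
      ring
    have h2 : (b * m).c = b.c := by rw [mul_c, hc, add_zero]
    have h3 : (b * m * b⁻¹).d = (b * b⁻¹).d := by rw [mul_d, h1, h2, mul_d]
    rw [h3, mul_inv_cancel, one_d]

theorem Zinv_c : ((Z : Mdl p α)⁻¹).c = -1 := by rw [inv_c, Z_c]
theorem Zinv_dn : dn ((Z : Mdl p α)⁻¹).a = 0 := by rw [dn_inv_a, Z_a, dn_zero, neg_zero]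
theorem Zinv_d : ((Z : Mdl p α)⁻¹).d = -1 := by
  rw [inv_d, Z_c, Z_a, Z_d, dn_zero, carry_neg_one_one]
  push_cast
  ring

theorem normalCore_SH : (SH p α).normalCore = K2 p α := by
  apply le_antisymm
  · intro m hm
    have hmem : m ∈ SH p α := (SH p α).normalCore_le hm
    obtain ⟨hc, hd⟩ := hmem
    have hZ : (Z : Mdl p α) * m * Z⁻¹ ∈ SH p α := hm Z
    have hZd := hZ.2
    have hd2 : ((Z : Mdl p α) * m * Z⁻¹).d = - dn m.a := by
      simp only [mul_d, mul_c, Zinv_d, Zinv_dn, Zinv_c, Z_c, Z_d, hc, hd, add_zero,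
        carry_zero_right, carry_one_neg_one, mul_zero, Nat.cast_zero, Nat.cast_one]
      ring
    rw [hd2] at hZd
    exact ⟨neg_eq_zero.mp hZd, hc, hd⟩
  · intro m hm b
    exact K2_le_SH (K2_conj b m hm)

theorem closure_XpY : Subgroup.closure ({(X : Mdl p α) ^ p, Y} : Set (Mdl p α)) = K2 p α := by
  apply le_antisymm
  · rw [Subgroup.closure_le]
    rintro g hg
    simp only [Set.mem_insert_iff, Set.mem_singleton_iff] at hg
    rcases hg with rfl | rfl
    · rw [X_pow_p]
      exact ⟨dn_lp 1, rfl, rfl⟩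
    · exact ⟨dn_zero, rfl, rfl⟩
  · rintro m ⟨ha, hc, hd⟩
    obtain ⟨t, ht⟩ := dn_eq_zero_iff.mp ha
    have key : m = ((X : Mdl p α) ^ p) ^ t.val * (Y : Mdl p α) ^ m.b.val := by
      rw [Xp_pow, Y_pow, natCast_val_self, natCast_val_self, cel_mul, ext_iff']
      exact ⟨by rw [mk_a, mk_a, ht, add_zero], by rw [mk_b, mk_b], by rw [mk_c, mk_c, hc],
        by rw [mk_d, mk_d, hd, zero_add]⟩
    rw [key]
    exact mul_mem (pow_mem (Subgroup.subset_closure (by simp)) _)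
      (pow_mem (Subgroup.subset_closure (by simp)) _)

variable (p α) in
/-- `⟨y,z⟩ = {(lp (α e), b, c, e)}` as a subgroup. -/
def SJ : Subgroup (Mdl p α) where
  carrier := {m | m.a = lp ((α : ZMod p) * m.d)}
  one_mem' := by
    show (0 : ZMod (p ^ 2)) = lp ((α : ZMod p) * (0 : ZMod p))
    rw [mul_zero, lp_zero]
  mul_mem' := by
    rintro m m' hm hm'
    have ha : m.a = lp ((α : ZMod p) * m.d) := hm
    have ha' : m'.a = lp ((α : ZMod p) * m'.d) := hm'
    show (m * m').a = lp ((α : ZMod p) * (m * m').d)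
    rw [mul_a, mul_d, ha, ha', dn_lp]
    rw [show m.c * 0 * ((0 : ZMod p) - 1) * (2 : ZMod p)⁻¹ - 0 * m.b
        + (α : ZMod p) * ((carry m.c m'.c : ℕ) : ZMod p)
        = (α : ZMod p) * ((carry m.c m'.c : ℕ) : ZMod p) by ring]
    rw [← lp_add, ← lp_add]
    congr 1
    ring
  inv_mem' := by
    rintro m hm
    have ha : m.a = lp ((α : ZMod p) * m.d) := hm
    show (m⁻¹).a = lp ((α : ZMod p) * (m⁻¹).d)
    rw [inv_a, inv_d, ha, dn_lp]
    rw [show (-m.c) * 0 * ((0 : ZMod p) - 1) * (2 : ZMod p)⁻¹ - 0 * ((-m.c) * 0 - m.b)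
        + (α : ZMod p) * ((carry (-m.c) m.c : ℕ) : ZMod p)
        = (α : ZMod p) * ((carry (-m.c) m.c : ℕ) : ZMod p) by ring]
    rw [sub_eq_add_neg, ← lp_neg, ← lp_neg, ← lp_add]
    congr 1
    ring

theorem mem_SJ {m : Mdl p α} : m ∈ SJ p α ↔ m.a = lp ((α : ZMod p) * m.d) := Iff.rfl

theorem closure_YZ : Subgroup.closure ({(Y : Mdl p α), Z} : Set (Mdl p α)) = SJ p α := by
  apply le_antisymm
  · rw [Subgroup.closure_le]
    rintro g hg
    simp only [Set.mem_insert_iff, Set.mem_singleton_iff] at hg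
    rcases hg with rfl | rfl
    · show (Y : Mdl p α).a = lp ((α : ZMod p) * (Y : Mdl p α).d)
      rw [Y_a, Y_d, mul_zero, lp_zero]
    · show (Z : Mdl p α).a = lp ((α : ZMod p) * (Z : Mdl p α).d)
      rw [Z_a, Z_d, mul_zero, lp_zero]
  · intro m hm
    have ha : m.a = lp ((α : ZMod p) * m.d) := hm
    have h1 : (Y : Mdl p α) ^ m.b.val * (Z : Mdl p α) ^ m.c.val = ⟨0, m.b, m.c, 0⟩ := by
      rw [Y_pow, Z_pow_lt (ZMod.val_lt m.c), natCast_val_self, natCast_val_self, ext_iff']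
      refine ⟨?_, ?_, ?_, ?_⟩ <;>
        simp only [mul_a, mul_b, mul_c, mul_d, mk_a, mk_b, mk_c, mk_d, dn_zero, zero_mul,
          mul_zero, zero_sub, neg_zero, sub_zero, sub_self, carry_zero_left, carry_zero_right,
          Nat.cast_zero, add_zero, zero_add, lp_zero]
    have h2 : ((Z : Mdl p α) ^ p) ^ m.d.val = ⟨lp (m.d * (α : ZMod p)), 0, 0, m.d⟩ := by
      rw [Z_pow_p, cel_pow, natCast_val_self, mul_one]
    have key : m = (Y : Mdl p α) ^ m.b.val * (Z : Mdl p α) ^ m.c.val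
        * ((Z : Mdl p α) ^ p) ^ m.d.val := by
      rw [h1, h2, mul_cel, ext_iff']
      refine ⟨?_, ?_, ?_, ?_⟩ <;>
        simp only [mk_a, mk_b, mk_c, mk_d, zero_add]
      rw [ha]
      exact congrArg lp (mul_comm _ _)
    rw [key]
    exact mul_mem (mul_mem (pow_mem (Subgroup.subset_closure (by simp)) _)
      (pow_mem (Subgroup.subset_closure (by simp)) _))
      (pow_mem (pow_mem (Subgroup.subset_closure (by simp)) _) _)

theorem Xinv_c : ((X : Mdl p α)⁻¹).c = 0 := by rw [inv_c, X_c, neg_zero]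
theorem Xinv_b : ((X : Mdl p α)⁻¹).b = 0 := by
  rw [inv_b, X_b, X_c, X_a, dn_one, neg_zero, zero_mul, sub_zero]
theorem Xinv_d : ((X : Mdl p α)⁻¹).d = 0 := by
  rw [inv_d, X_c, X_a, X_d, neg_zero, carry_zero_left]
  push_cast
  ring
theorem Xinv_a : ((X : Mdl p α)⁻¹).a = -1 := by
  rw [inv_a, X_a, X_b, X_c, dn_one, neg_zero, carry_zero_left]
  rw [show (0 : ZMod p) * 1 * (1 - 1) * (2 : ZMod p)⁻¹ - 1 * (0 * 1 - 0)
      + (α : ZMod p) * (((0 : ℕ) : ℕ) : ZMod p) = 0 by push_cast; ring]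
  rw [lp_zero, sub_zero]

theorem cores_inf_eq_bot :
    (Subgroup.closure ({(X : Mdl p α), Y} : Set (Mdl p α))).normalCore
      ⊓ (Subgroup.closure ({(Y : Mdl p α), Z} : Set (Mdl p α))).normalCore = ⊥ := by
  rw [closure_XY, closure_YZ, normalCore_SH]
  rw [Subgroup.eq_bot_iff_forall]
  intro m hm
  obtain ⟨hmK2, hmJ⟩ := Subgroup.mem_inf.mp hm
  obtain ⟨hdn, hc, hd⟩ := mem_K2.mp hmK2
  have hJ : m ∈ SJ p α := (SJ p α).normalCore_le hmJ
  have ha0 : m.a = 0 := by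
    have := mem_SJ.mp hJ
    rw [hd, mul_zero, lp_zero] at this
    exact this
  -- conjugating by X forces b = 0
  have hXm_c : ((X : Mdl p α) * m).c = 0 := by rw [mul_c, X_c, hc, add_zero]
  have hXm_b : ((X : Mdl p α) * m).b = m.b := by rw [mul_b, X_b, X_c]; ring
  have hXm_d : ((X : Mdl p α) * m).d = 0 := by
    rw [mul_d, X_d, X_c, hd, hc, carry_zero_left]
    push_cast
    ring
  have hXm_a : ((X : Mdl p α) * m).a = 1 := by
    rw [mul_a, X_a, X_b, X_c, ha0, dn_zero, carry_zero_left]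
    rw [show (0 : ZMod p) * 0 * (0 - 1) * (2 : ZMod p)⁻¹ - 0 * 0
        + (α : ZMod p) * (((0 : ℕ) : ℕ) : ZMod p) = 0 by push_cast; ring]
    rw [lp_zero, add_zero, add_zero]
  have hprod_d : ((X : Mdl p α) * m * X⁻¹).d = 0 := by
    rw [mul_d, hXm_d, hXm_c, Xinv_d, carry_zero_left]
    push_cast
    ring
  have hprod_a : ((X : Mdl p α) * m * X⁻¹).a = lp m.b := by
    rw [mul_a, hXm_a, hXm_b, hXm_c, Xinv_a, Xinv_c, carry_zero_left, dn_neg, dn_one]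
    rw [show (0 : ZMod p) * (-1) * (-1 - 1) * (2 : ZMod p)⁻¹ - (-1) * m.b
        + (α : ZMod p) * (((0 : ℕ) : ℕ) : ZMod p) = m.b by push_cast; ring]
    ring
  have h2 : (X : Mdl p α) * m * X⁻¹ ∈ SJ p α := hmJ X
  have h3 := mem_SJ.mp h2
  rw [hprod_a, hprod_d, mul_zero, lp_zero] at h3
  have hb0 : m.b = 0 := lp_inj (by rw [lp_zero]; exact h3)
  rw [ext_iff']
  exact ⟨by rw [ha0, one_a], by rw [hb0, one_b], by rw [hc, one_c], by rw [hd, one_d]⟩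

theorem dn_eq_cast (a : ZMod (p ^ 2)) : dn a = ((a.val : ℕ) : ZMod p) := by
  unfold dn
  rw [ZMod.castHom_apply, ZMod.natCast_val]

theorem lp_dn (a : ZMod (p ^ 2)) : lp (dn a) = a * p := by
  rw [dn_eq_cast, lp_natCast, natCast_val_self]
  ring

theorem lp_mul_p (t : ZMod p) : lp t * (p : ZMod (p ^ 2)) = 0 := by
  unfold lp
  rw [mul_comm, ← mul_assoc, pp_zero, zero_mul]

theorem lp_half (u : ZMod (p ^ 2)) :
    (p : ZMod (p ^ 2)) * ((u.val * (u.val - 1) / 2 : ℕ) : ZMod (p ^ 2))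
      = lp (dn u * (dn u - 1) * (2 : ZMod p)⁻¹) := by
  rw [← lp_natCast]
  congr 1
  have h2 : (2 : ZMod p) * ((u.val * (u.val - 1) / 2 : ℕ) : ZMod p)
      = (2 : ZMod p) * (dn u * (dn u - 1) * (2 : ZMod p)⁻¹) := by
    have hev : 2 * (u.val * (u.val - 1) / 2) = u.val * (u.val - 1) := by
      rcases Nat.even_mul_succ_self (u.val - 1) with ⟨k, hk⟩
      rcases Nat.eq_zero_or_pos u.val with h0 | h0
      · simp [h0]
      · have h1 : u.val - 1 + 1 = u.val := by omega
        rw [h1, Nat.mul_comm (u.val - 1) u.val] at hk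
        omega
    have hcast : ((u.val * (u.val - 1) : ℕ) : ZMod p) = dn u * (dn u - 1) := by
      rcases Nat.eq_zero_or_pos u.val with h0 | h0
      · rw [h0]; rw [dn_eq_cast, h0]; push_cast; ring
      · rw [Nat.cast_mul, Nat.cast_sub h0, dn_eq_cast]; push_cast; ring
    calc (2 : ZMod p) * ((u.val * (u.val - 1) / 2 : ℕ) : ZMod p)
        = ((2 * (u.val * (u.val - 1) / 2) : ℕ) : ZMod p) := by push_cast; ring
      _ = ((u.val * (u.val - 1) : ℕ) : ZMod p) := by rw [hev]
      _ = dn u * (dn u - 1) := hcast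
      _ = (2 : ZMod p) * (dn u * (dn u - 1) * (2 : ZMod p)⁻¹) := by
          rw [show (2 : ZMod p) * (dn u * (dn u - 1) * (2 : ZMod p)⁻¹)
            = (dn u * (dn u - 1)) * ((2 : ZMod p) * (2 : ZMod p)⁻¹) by ring, two_inv_mul, mul_one]
  have h2' := congrArg (fun w => (2 : ZMod p)⁻¹ * w) h2
  rwa [← mul_assoc, ← mul_assoc, mul_comm ((2:ZMod p)⁻¹) 2, two_inv_mul, one_mul, one_mul] at h2'

theorem X_mul (m : Mdl p α) : (X : Mdl p α) * m = ⟨1 + m.a, m.b, m.c, m.d⟩ := by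
  rw [ext_iff']
  refine ⟨?_, ?_, ?_, ?_⟩ <;>
    simp only [mul_a, mul_b, mul_c, mul_d, X_a, X_b, X_c, X_d, mk_a, mk_b, mk_c, mk_d,
      carry_zero_left, Nat.cast_zero, mul_zero, zero_mul, sub_zero, zero_sub, neg_zero,
      add_zero, zero_add, lp_zero]

theorem N_mul (m : Mdl p α) : (N : Mdl p α) * m = ⟨m.a, m.b, m.c, 1 + m.d⟩ := by
  rw [ext_iff']
  refine ⟨?_, ?_, ?_, ?_⟩ <;>
    simp only [mul_a, mul_b, mul_c, mul_d, N_a, N_b, N_c, N_d, mk_a, mk_b, mk_c, mk_d,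
      carry_zero_left, Nat.cast_zero, mul_zero, zero_mul, sub_zero, zero_sub, neg_zero,
      add_zero, zero_add, lp_zero]

theorem Y_mul (m : Mdl p α) : (Y : Mdl p α) * m = ⟨m.a - lp (dn m.a), 1 + m.b, m.c, m.d⟩ := by
  rw [ext_iff']
  refine ⟨?_, ?_, ?_, ?_⟩ <;>
    simp only [mul_a, mul_b, mul_c, mul_d, Y_a, Y_b, Y_c, Y_d, mk_a, mk_b, mk_c, mk_d,
      carry_zero_left, Nat.cast_zero, mul_zero, zero_mul, mul_one, sub_zero, zero_sub,
      neg_zero, add_zero, zero_add, lp_zero]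
  all_goals try rfl
  all_goals try (rw [lp_neg]; ring)

theorem Z_mul (m : Mdl p α) : (Z : Mdl p α) * m =
    ⟨m.a + lp (dn m.a * (dn m.a - 1) * (2 : ZMod p)⁻¹
        + (α : ZMod p) * ((carry 1 m.c : ℕ) : ZMod p)),
     m.b - dn m.a, 1 + m.c, m.d - dn m.a + ((carry 1 m.c : ℕ) : ZMod p)⟩ := by
  rw [ext_iff']
  refine ⟨?_, ?_, ?_, ?_⟩ <;>
    simp only [mul_a, mul_b, mul_c, mul_d, Z_a, Z_b, Z_c, Z_d, mk_a, mk_b, mk_c, mk_d,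
      Nat.cast_zero, mul_zero, zero_mul, mul_one, one_mul, sub_zero, zero_sub,
      neg_zero, add_zero, zero_add, lp_zero]
  all_goals try rfl
  all_goals try ring

theorem prod_XY (m : Mdl p α) :
    (X : Mdl p α) ^ m.a.val * (Y : Mdl p α) ^ m.b.val = ⟨m.a, m.b, 0, 0⟩ := by
  rw [X_pow, Y_pow, natCast_val_self, natCast_val_self, ext_iff']
  refine ⟨?_, ?_, ?_, ?_⟩ <;>
    simp only [mul_a, mul_b, mul_c, mul_d, mk_a, mk_b, mk_c, mk_d, dn_zero, zero_mul,
      mul_zero, zero_sub, neg_zero, sub_zero, sub_self, carry_zero_left, carry_zero_right,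
      Nat.cast_zero, add_zero, zero_add, lp_zero]

theorem decomp (m : Mdl p α) : m = (X : Mdl p α) ^ m.a.val * (Y : Mdl p α) ^ m.b.val
    * (Z : Mdl p α) ^ m.c.val * (N : Mdl p α) ^ m.d.val := by
  rw [prod_XY, Z_pow_lt (ZMod.val_lt m.c), N_pow, natCast_val_self, natCast_val_self]
  have h1 : (⟨m.a, m.b, 0, 0⟩ : Mdl p α) * ⟨0, 0, m.c, 0⟩ = ⟨m.a, m.b, m.c, 0⟩ := by
    rw [ext_iff']
    refine ⟨?_, ?_, ?_, ?_⟩ <;>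
      simp only [mul_a, mul_b, mul_c, mul_d, mk_a, mk_b, mk_c, mk_d, dn_zero, zero_mul,
        mul_zero, zero_sub, neg_zero, sub_zero, sub_self, carry_zero_left, carry_zero_right,
        Nat.cast_zero, add_zero, zero_add, lp_zero]
  have h2 : (⟨m.a, m.b, m.c, 0⟩ : Mdl p α) * ⟨0, 0, 0, m.d⟩ = m := by
    rw [ext_iff']
    refine ⟨?_, ?_, ?_, ?_⟩ <;>
      simp only [mul_a, mul_b, mul_c, mul_d, mk_a, mk_b, mk_c, mk_d, dn_zero, zero_mul,
        mul_zero, zero_sub, neg_zero, sub_zero, sub_self, carry_zero_left, carry_zero_right,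
        Nat.cast_zero, add_zero, zero_add, lp_zero]
  rw [h1, h2]

theorem X_ord : (X : Mdl p α) ^ (p ^ 2) = 1 := by
  rw [X_pow, ZMod.natCast_self]; rfl

theorem Y_ord : (Y : Mdl p α) ^ p = 1 := by
  rw [Y_pow, ZMod.natCast_self]; rfl

theorem N_ord : (N : Mdl p α) ^ p = 1 := by
  rw [N_pow, ZMod.natCast_self]; rfl

theorem Z_p_rel : (Z : Mdl p α) ^ p = (X : Mdl p α) ^ (α * p) * N := by
  rw [Z_pow_p, X_pow]
  have hX : ((α * p : ℕ) : ZMod (p ^ 2)) = lp ((α : ZMod p)) := by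
    rw [lp_natCast]; push_cast; ring
  rw [hX]
  have : (⟨lp (α : ZMod p), 0, 0, 0⟩ : Mdl p α) * N = ⟨lp (α : ZMod p) + 0, 0, 0, 0 + 1⟩ := by
    exact cel_mul (α : ZMod p) 0 N
  rw [show (N : Mdl p α) = ⟨(0 : ZMod (p^2)), 0, 0, 1⟩ from rfl] at this ⊢
  rw [this, ext_iff']
  exact ⟨by rw [mk_a, mk_a, add_zero], rfl, rfl, by rw [mk_d, mk_d, zero_add]⟩

theorem Z_ord : (Z : Mdl p α) ^ (p ^ 2) = 1 := by
  rw [pow_two, pow_mul, Z_pow_p, cel_pow, ZMod.natCast_self, zero_mul, zero_mul, lp_zero]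
  rfl

theorem XZ_rel : (X : Mdl p α) * Z = Z * ((X : Mdl p α) * (Y * N)) := by
  have h1 : (Y : Mdl p α) * N = ⟨0, 1, 0, 1⟩ := by
    rw [Y_mul, ext_iff']
    refine ⟨?_, ?_, ?_, ?_⟩ <;>
      simp only [mk_a, mk_b, mk_c, mk_d, N_a, N_b, N_c, N_d, dn_zero, lp_zero, sub_zero,
        add_zero, zero_add]
  have h2 : (X : Mdl p α) * ⟨0, 1, 0, 1⟩ = ⟨1, 1, 0, 1⟩ := by
    rw [X_mul, ext_iff']
    refine ⟨?_, ?_, ?_, ?_⟩ <;> simp only [mk_a, mk_b, mk_c, mk_d, add_zero]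
  rw [h1, h2, X_mul, Z_mul, ext_iff']
  refine ⟨?_, ?_, ?_, ?_⟩ <;>
    simp only [mk_a, mk_b, mk_c, mk_d, Z_a, Z_b, Z_c, Z_d, dn_one, carry_zero_right,
      Nat.cast_zero, mul_zero, zero_mul, mul_one, one_mul, sub_self, zero_sub, sub_zero,
      neg_zero, add_zero, zero_add, lp_zero]
  all_goals try rfl
  all_goals try ring
  all_goals try (rw [show (1 : ZMod p) - 1 = 0 by ring]; simp [lp_zero])

theorem XY_rel : (X : Mdl p α) * Y = Y * ((X : Mdl p α) * X ^ p) := by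
  have h1 : (X : Mdl p α) * X ^ p = X ^ (p + 1) := (pow_succ' X p).symm
  have h2 : (X : Mdl p α) * Y = ⟨1, 1, 0, 0⟩ := by
    rw [X_mul, ext_iff']
    refine ⟨?_, ?_, ?_, ?_⟩ <;> simp only [mk_a, mk_b, mk_c, mk_d, Y_a, Y_b, Y_c, Y_d, add_zero]
  rw [h1, h2, X_pow]
  have hdn : dn ((p + 1 : ℕ) : ZMod (p ^ 2)) = 1 := by
    rw [dn_natCast]; push_cast [ZMod.natCast_self]; ring
  rw [ext_iff']
  refine ⟨?_, ?_, ?_, ?_⟩ <;>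
    simp only [mul_a, mul_b, mul_c, mul_d, mk_a, mk_b, mk_c, mk_d, Y_a, Y_b, Y_c, Y_d, hdn,
      carry_zero_left, Nat.cast_zero, mul_zero, zero_mul, mul_one, one_mul, sub_self,
      zero_sub, sub_zero, neg_zero, add_zero, zero_add, lp_zero]
  all_goals try rfl
  all_goals try ring
  all_goals try (rw [lp_neg, lp_one]; push_cast; ring)

theorem YZ_comm : (Y : Mdl p α) * Z = Z * Y := by
  rw [Y_mul, Z_mul, ext_iff']
  refine ⟨?_, ?_, ?_, ?_⟩ <;>
    simp only [mk_a, mk_b, mk_c, mk_d, Y_a, Y_b, Y_c, Y_d, Z_a, Z_b, Z_c, Z_d, dn_zero,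
      carry_zero_right, Nat.cast_zero, mul_zero, zero_mul, sub_self, zero_sub, sub_zero,
      neg_zero, add_zero, zero_add, lp_zero]
  all_goals try rfl
  all_goals try ring
  all_goals try (rw [show (0 : ZMod p) * (0 - 1) * (2 : ZMod p)⁻¹ = 0 by ring]; simp [lp_zero])

theorem XN_comm : (X : Mdl p α) * N = N * X := by
  rw [X_mul, N_mul, ext_iff']
  refine ⟨?_, ?_, ?_, ?_⟩ <;>
    simp only [mk_a, mk_b, mk_c, mk_d, X_a, X_b, X_c, X_d, N_a, N_b, N_c, N_d, add_zero,
      zero_add]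

theorem YN_comm : (Y : Mdl p α) * N = N * Y := by
  rw [Y_mul, N_mul, ext_iff']
  refine ⟨?_, ?_, ?_, ?_⟩ <;>
    simp only [mk_a, mk_b, mk_c, mk_d, X_a, X_b, X_c, X_d, N_a, N_b, N_c, N_d, Y_a, Y_b, Y_c,
      Y_d, dn_zero, lp_zero, sub_zero, add_zero, zero_add]

theorem ZN_comm : (Z : Mdl p α) * N = N * Z := by
  rw [Z_mul, N_mul, ext_iff']
  refine ⟨?_, ?_, ?_, ?_⟩ <;>
    simp only [mk_a, mk_b, mk_c, mk_d, N_a, N_b, N_c, N_d, Z_a, Z_b, Z_c, Z_d, dn_zero,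
      carry_zero_right, Nat.cast_zero, mul_zero, zero_mul, sub_self, zero_sub, sub_zero,
      neg_zero, add_zero, zero_add, lp_zero]
  all_goals try rfl
  all_goals try ring
  all_goals try (rw [show (0 : ZMod p) * (0 - 1) * (2 : ZMod p)⁻¹ = 0 by ring]; simp [lp_zero])

theorem carry_one_lt {c : ZMod p} (h : 1 + c.val < p) : carry (1 : ZMod p) c = 0 := by
  unfold carry
  rw [val_one']
  split <;> omega

theorem carry_one_eq {c : ZMod p} (h : 1 + c.val = p) : carry (1 : ZMod p) c = 1 := by
  unfold carry
  rw [val_one']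
  split <;> omega

theorem one_add_val_lt {c : ZMod p} (h : 1 + c.val < p) : (1 + c).val = 1 + c.val := by
  have := carry_eq (1 : ZMod p) c
  rw [carry_one_lt h, val_one'] at this
  omega

theorem one_add_val_eq {c : ZMod p} (h : 1 + c.val = p) : (1 + c).val = 0 := by
  have := carry_eq (1 : ZMod p) c
  rw [carry_one_eq h, val_one'] at this
  omega

end Mdl
/-! ### Generic helpers -/

section Helpers

variable {G : Type*} [Group G]

theorem pow_mod_eq {g : G} {k : ℕ} (hg : g ^ k = 1) (m : ℕ) : g ^ m = g ^ (m % k) := by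
  conv_lhs => rw [← Nat.div_add_mod m k]
  rw [pow_add, pow_mul, hg, one_pow, one_mul]

theorem pow_congr' {g : G} {k : ℕ} (hg : g ^ k = 1) {m m' : ℕ} (h : m % k = m' % k) :
    g ^ m = g ^ m' := by
  rw [pow_mod_eq hg m, pow_mod_eq hg m', h]

theorem rel_of_comm {a b c : G} (h : a * b = b * (a * c)) :
    a⁻¹ * b⁻¹ * a * b * c⁻¹ = 1 := by
  have h2 : a⁻¹ * b⁻¹ * (a * b) * c⁻¹ = a⁻¹ * b⁻¹ * (b * (a * c)) * c⁻¹ := by rw [h]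
  rw [show a⁻¹ * b⁻¹ * a * b * c⁻¹ = a⁻¹ * b⁻¹ * (a * b) * c⁻¹ by group, h2]
  group

theorem rel_of_commute {a b : G} (h : a * b = b * a) : a⁻¹ * b⁻¹ * a * b = 1 := by
  rw [show a⁻¹ * b⁻¹ * a * b = a⁻¹ * b⁻¹ * (a * b) by group, h]
  group

theorem comm_of_rel {a b c : G} (h : a⁻¹ * b⁻¹ * a * b * c⁻¹ = 1) : a * b = b * (a * c) := by
  have hc : a⁻¹ * b⁻¹ * a * b = c := by
    have h2 : (a⁻¹ * b⁻¹ * a * b) * c⁻¹ = 1 := by rw [← h]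
    exact mul_inv_eq_one.mp h2
  calc a * b = b * a * (a⁻¹ * b⁻¹ * a * b) := by group
    _ = b * a * c := by rw [hc]
    _ = b * (a * c) := by group

theorem commute_of_rel {a b : G} (h : a⁻¹ * b⁻¹ * a * b = 1) : a * b = b * a := by
  calc a * b = b * a * (a⁻¹ * b⁻¹ * a * b) := by group
    _ = b * a := by rw [h, mul_one]

/-- `g^(t.val)` for `t : ZMod n`. -/
def zexp {n : ℕ} (g : G) (t : ZMod n) : G := g ^ t.val

theorem pow_val_add {n : ℕ} [NeZero n] {g : G} (hg : g ^ n = 1) (u v : ZMod n) :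
    g ^ (u + v).val = g ^ u.val * g ^ v.val := by
  rw [← pow_add]
  exact pow_congr' hg (by rw [ZMod.val_add]; exact Nat.mod_mod_of_dvd _ dvd_rfl)

theorem zexp_add {n : ℕ} [NeZero n] {g : G} (hg : g ^ n = 1) (t u : ZMod n) :
    zexp g (t + u) = zexp g t * zexp g u := pow_val_add hg t u

theorem zexp_zero {n : ℕ} [NeZero n] {g : G} : zexp g (0 : ZMod n) = 1 := by
  simp [zexp, ZMod.val_zero]

theorem zexp_neg {n : ℕ} [NeZero n] {g : G} (hg : g ^ n = 1) (t : ZMod n) :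
    zexp g (-t) = (zexp g t)⁻¹ := by
  have h := (zexp_add hg t (-t)).symm
  rw [add_neg_cancel, zexp_zero] at h
  exact eq_inv_of_mul_eq_one_right h

theorem zexp_natCast {n : ℕ} [NeZero n] {g : G} (hg : g ^ n = 1) (k : ℕ) :
    zexp g ((k : ℕ) : ZMod n) = g ^ k := by
  rw [zexp]
  exact (pow_congr' hg (by rw [ZMod.val_natCast]; exact (Nat.mod_mod_of_dvd _ dvd_rfl).symm)).symm

theorem zexp_one {n : ℕ} [NeZero n] {g : G} (hg : g ^ n = 1) : zexp g (1 : ZMod n) = g := by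
  rw [← Nat.cast_one, zexp_natCast hg, pow_one]

theorem pow_eq_zexp {n : ℕ} [NeZero n] {g : G} (hg : g ^ n = 1) {k : ℕ} {u : ZMod n}
    (h : ((k : ℕ) : ZMod n) = u) : g ^ k = zexp g u := by
  rw [← h, zexp_natCast hg]

end Helpers

/-! ### Relations in `E₃` -/

section E3rels

variable (p α : ℕ)

theorem rel_one {r : FreeGroup (Fin 4)} (hr : r ∈ E3defs.rels p α) :
    PresentedGroup.mk (E3defs.rels p α) r = 1 :=
  (QuotientGroup.eq_one_iff r).mpr (Subgroup.subset_normalClosure hr)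

theorem Er1 : (xE p α) ^ (p ^ 2) = 1 := by
  have h := rel_one p α (show E3defs.x ^ (p ^ 2) ∈ E3defs.rels p α by simp [E3defs.rels])
  rwa [map_pow] at h

theorem Er2 : (yE p α) ^ p = 1 := by
  have h := rel_one p α (show E3defs.y ^ p ∈ E3defs.rels p α by simp [E3defs.rels])
  rwa [map_pow] at h

theorem Er3 : (zE p α) ^ (p ^ 2) = 1 := by
  have h := rel_one p α (show E3defs.z ^ (p ^ 2) ∈ E3defs.rels p α by simp [E3defs.rels])
  rwa [map_pow] at h

theorem Er4 : (nE p α) ^ p = 1 := by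
  have h := rel_one p α (show E3defs.n ^ p ∈ E3defs.rels p α by simp [E3defs.rels])
  rwa [map_pow] at h

theorem Er5 : (zE p α) ^ p = (xE p α) ^ (α * p) * nE p α := by
  have h := rel_one p α (show E3defs.z ^ p * (E3defs.x ^ (α * p) * E3defs.n)⁻¹
    ∈ E3defs.rels p α by simp [E3defs.rels])
  rw [map_mul, map_inv, map_mul, map_pow, map_pow] at h
  exact mul_inv_eq_one.mp h

theorem Er6 : xE p α * zE p α = zE p α * (xE p α * (yE p α * nE p α)) := by
  have h := rel_one p α (show comm' E3defs.x E3defs.z * (E3defs.y * E3defs.n)⁻¹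
    ∈ E3defs.rels p α by simp [E3defs.rels])
  simp only [comm', map_mul, map_inv] at h
  exact comm_of_rel h

theorem Er7 : xE p α * yE p α = yE p α * (xE p α * (xE p α) ^ p) := by
  have h := rel_one p α (show comm' E3defs.x E3defs.y * (E3defs.x ^ p)⁻¹
    ∈ E3defs.rels p α by simp [E3defs.rels])
  simp only [comm', map_mul, map_inv, map_pow] at h
  exact comm_of_rel h

theorem Er8 : yE p α * zE p α = zE p α * yE p α := by
  have h := rel_one p α (show comm' E3defs.y E3defs.z ∈ E3defs.rels p α by simp [E3defs.rels])
  simp only [comm', map_mul, map_inv] at h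
  exact commute_of_rel h

theorem Er9 : xE p α * nE p α = nE p α * xE p α := by
  have h := rel_one p α (show comm' E3defs.x E3defs.n ∈ E3defs.rels p α by simp [E3defs.rels])
  simp only [comm', map_mul, map_inv] at h
  exact commute_of_rel h

theorem Er10 : yE p α * nE p α = nE p α * yE p α := by
  have h := rel_one p α (show comm' E3defs.y E3defs.n ∈ E3defs.rels p α by simp [E3defs.rels])
  simp only [comm', map_mul, map_inv] at h
  exact commute_of_rel h

theorem Er11 : zE p α * nE p α = nE p α * zE p α := by
  have h := rel_one p α (show comm' E3defs.z E3defs.n ∈ E3defs.rels p α by simp [E3defs.rels])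
  simp only [comm', map_mul, map_inv] at h
  exact commute_of_rel h

end E3rels

/-! ### Word computations in `E₃` -/

section E3words

variable (p α : ℕ) [Fact p.Prime] [Fact (Odd p)]

theorem commYZ : Commute (yE p α) (zE p α) := Er8 p α
theorem commXN : Commute (xE p α) (nE p α) := Er9 p α
theorem commYN : Commute (yE p α) (nE p α) := Er10 p α
theorem commZN : Commute (zE p α) (nE p α) := Er11 p α

theorem L1 : ∀ k : ℕ, (xE p α) ^ k * yE p α = yE p α * (xE p α) ^ (k + p * k) := by
  intro k
  induction k with
  | zero => simp
  | succ k ih =>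
    rw [pow_succ]
    calc xE p α ^ k * xE p α * yE p α
        = xE p α ^ k * (xE p α * yE p α) := by group
      _ = xE p α ^ k * (yE p α * (xE p α * xE p α ^ p)) := by rw [Er7]
      _ = (xE p α ^ k * yE p α) * (xE p α * xE p α ^ p) := by group
      _ = yE p α * xE p α ^ (k + p * k) * (xE p α * xE p α ^ p) := by rw [ih]
      _ = yE p α * (xE p α ^ (k + p * k) * xE p α ^ 1 * xE p α ^ p) := by rw [pow_one]; group
      _ = yE p α * xE p α ^ (k + p * k + 1 + p) := by rw [← pow_add, ← pow_add]
      _ = yE p α * xE p α ^ ((k + 1) + p * (k + 1)) := by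
          rw [show k + p * k + 1 + p = (k + 1) + p * (k + 1) by ring]

theorem L1inv : ∀ m : ℕ, (yE p α)⁻¹ * (xE p α) ^ m = (xE p α) ^ (m + p * m) * (yE p α)⁻¹ := by
  intro m
  calc (yE p α)⁻¹ * (xE p α) ^ m
      = (yE p α)⁻¹ * ((xE p α) ^ m * yE p α) * (yE p α)⁻¹ := by group
    _ = (yE p α)⁻¹ * (yE p α * (xE p α) ^ (m + p * m)) * (yE p α)⁻¹ := by rw [L1]
    _ = (xE p α) ^ (m + p * m) * (yE p α)⁻¹ := by group

theorem zxrel : zE p α * xE p α = (xE p α * ((yE p α)⁻¹ * (nE p α)⁻¹)) * zE p α := by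
  have h1 : (nE p α)⁻¹ * zE p α = zE p α * (nE p α)⁻¹ := ((commZN p α).symm.inv_left).eq
  have h2 : (yE p α)⁻¹ * zE p α = zE p α * (yE p α)⁻¹ := ((commYZ p α).inv_left).eq
  have h3 : nE p α * (yE p α)⁻¹ = (yE p α)⁻¹ * nE p α := ((commYN p α).symm.inv_right).eq
  symm
  calc (xE p α * ((yE p α)⁻¹ * (nE p α)⁻¹)) * zE p α
      = xE p α * ((yE p α)⁻¹ * ((nE p α)⁻¹ * zE p α)) := by group
    _ = xE p α * ((yE p α)⁻¹ * (zE p α * (nE p α)⁻¹)) := by rw [h1]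
    _ = xE p α * (((yE p α)⁻¹ * zE p α) * (nE p α)⁻¹) := by group
    _ = xE p α * ((zE p α * (yE p α)⁻¹) * (nE p α)⁻¹) := by rw [h2]
    _ = (xE p α * zE p α) * ((yE p α)⁻¹ * (nE p α)⁻¹) := by group
    _ = (zE p α * (xE p α * (yE p α * nE p α))) * ((yE p α)⁻¹ * (nE p α)⁻¹) := by rw [Er6]
    _ = zE p α * xE p α * (yE p α * (nE p α * (yE p α)⁻¹) * (nE p α)⁻¹) := by group
    _ = zE p α * xE p α * (yE p α * ((yE p α)⁻¹ * nE p α) * (nE p α)⁻¹) := by rw [h3]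
    _ = zE p α * xE p α := by group

theorem G5 : ∀ k : ℕ, zE p α * (xE p α) ^ k
    = (xE p α * ((yE p α)⁻¹ * (nE p α)⁻¹)) ^ k * zE p α := by
  intro k
  induction k with
  | zero => simp
  | succ k ih =>
    calc zE p α * (xE p α) ^ (k + 1)
        = (zE p α * (xE p α) ^ k) * xE p α := by rw [pow_succ]; group
      _ = ((xE p α * ((yE p α)⁻¹ * (nE p α)⁻¹)) ^ k * zE p α) * xE p α := by rw [ih]
      _ = (xE p α * ((yE p α)⁻¹ * (nE p α)⁻¹)) ^ k * (zE p α * xE p α) := by group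
      _ = (xE p α * ((yE p α)⁻¹ * (nE p α)⁻¹)) ^ k
          * ((xE p α * ((yE p α)⁻¹ * (nE p α)⁻¹)) * zE p α) := by rw [zxrel]
      _ = (xE p α * ((yE p α)⁻¹ * (nE p α)⁻¹)) ^ (k + 1) * zE p α := by rw [pow_succ]; group

/-- `f k = k + p k(k-1)/2`. -/
def fkn (k : ℕ) : ℕ := k + p * (k * (k - 1) / 2)

theorem fkn_step (k : ℕ) :
    (1 + (fkn p k + p * fkn p k)) % p ^ 2 = fkn p (k + 1) % p ^ 2 := by
  have hS : (k + 1) * ((k + 1) - 1) / 2 = k * (k - 1) / 2 + k := by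
    rcases Nat.eq_zero_or_pos k with rfl | hk
    · simp
    · have he : Even ((k - 1) * k) := by
        have := Nat.even_mul_succ_self (k - 1)
        rwa [show k - 1 + 1 = k by omega] at this
      obtain ⟨t, ht⟩ := he
      have h1 : (k + 1) * k = k * k + k := by ring
      have h2 : k * k = k * (k - 1) + k := by
        calc k * k = k * ((k - 1) + 1) := by rw [show k - 1 + 1 = k by omega]
          _ = k * (k - 1) + k := by ring
      have h3 : (k - 1) * k = k * (k - 1) := Nat.mul_comm _ _
      rw [show (k + 1) - 1 = k from rfl]
      omega
  have key : 1 + (fkn p k + p * fkn p k) = fkn p (k + 1) + p ^ 2 * (k * (k - 1) / 2) := by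
    unfold fkn
    rw [hS]
    ring
  rw [key, Nat.add_mul_mod_self_left]

theorem H1' : ∀ k : ℕ, (xE p α * ((yE p α)⁻¹ * (nE p α)⁻¹)) ^ k
    = (xE p α) ^ (fkn p k) * (((yE p α) ^ k)⁻¹ * ((nE p α) ^ k)⁻¹) := by
  intro k
  induction k with
  | zero => simp [fkn]
  | succ k ih =>
    have hnx : (nE p α)⁻¹ * (xE p α) ^ (fkn p k)
        = (xE p α) ^ (fkn p k) * (nE p α)⁻¹ := (((commXN p α).symm.inv_left).pow_right _).eq
    have hny : (nE p α)⁻¹ * ((yE p α) ^ k)⁻¹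
        = ((yE p α) ^ k)⁻¹ * (nE p α)⁻¹ := (((commYN p α).symm.pow_right k).inv_left.inv_right).eq
    calc (xE p α * ((yE p α)⁻¹ * (nE p α)⁻¹)) ^ (k + 1)
        = (xE p α * ((yE p α)⁻¹ * (nE p α)⁻¹))
          * ((xE p α) ^ (fkn p k) * (((yE p α) ^ k)⁻¹ * ((nE p α) ^ k)⁻¹)) := by
          rw [pow_succ', ih]
      _ = xE p α * ((yE p α)⁻¹ * (((nE p α)⁻¹ * (xE p α) ^ (fkn p k))
          * (((yE p α) ^ k)⁻¹ * ((nE p α) ^ k)⁻¹))) := by group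
      _ = xE p α * ((yE p α)⁻¹ * (((xE p α) ^ (fkn p k) * (nE p α)⁻¹)
          * (((yE p α) ^ k)⁻¹ * ((nE p α) ^ k)⁻¹))) := by rw [hnx]
      _ = xE p α * (((yE p α)⁻¹ * (xE p α) ^ (fkn p k))
          * ((nE p α)⁻¹ * (((yE p α) ^ k)⁻¹ * ((nE p α) ^ k)⁻¹))) := by group
      _ = xE p α * (((xE p α) ^ (fkn p k + p * fkn p k) * (yE p α)⁻¹)
          * ((nE p α)⁻¹ * (((yE p α) ^ k)⁻¹ * ((nE p α) ^ k)⁻¹))) := by rw [L1inv]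
      _ = (xE p α ^ 1 * (xE p α) ^ (fkn p k + p * fkn p k))
          * ((yE p α)⁻¹ * (((nE p α)⁻¹ * ((yE p α) ^ k)⁻¹) * ((nE p α) ^ k)⁻¹)) := by
          rw [pow_one]; group
      _ = (xE p α) ^ (1 + (fkn p k + p * fkn p k))
          * ((yE p α)⁻¹ * ((((yE p α) ^ k)⁻¹ * (nE p α)⁻¹) * ((nE p α) ^ k)⁻¹)) := by
          rw [hny, ← pow_add]
      _ = (xE p α) ^ (1 + (fkn p k + p * fkn p k))
          * ((((yE p α) ^ k) * yE p α)⁻¹ * (((nE p α) ^ k) * nE p α)⁻¹) := by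
          rw [mul_inv_rev, mul_inv_rev]; group
      _ = (xE p α) ^ (fkn p (k + 1)) * (((yE p α) ^ (k + 1))⁻¹ * ((nE p α) ^ (k + 1))⁻¹) := by
          rw [pow_congr' (Er1 p α) (fkn_step p k), ← pow_succ, ← pow_succ]

theorem zxk (k : ℕ) : zE p α * (xE p α) ^ k
    = (xE p α) ^ (fkn p k) * (((yE p α) ^ k)⁻¹ * ((((nE p α) ^ k)⁻¹) * zE p α)) := by
  rw [G5, H1']
  group

theorem hxp_y : (xE p α) ^ p * yE p α = yE p α * (xE p α) ^ p := by
  have h := L1 p α p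
  rwa [show p + p * p = p + p ^ 2 by ring, pow_add, Er1, mul_one] at h

end E3words

section PsiDef

variable (p α : ℕ) [Fact p.Prime] [Fact (Odd p)]

/-- The normal form map `Mdl → E₃`. -/
def psiE (m : Mdl p α) : E3 p α :=
  zexp (xE p α) m.a * (zexp (yE p α) m.b * ((zE p α) ^ m.c.val * zexp (nE p α) m.d))

theorem case_x (m : Mdl p α) : psiE p α (Mdl.X * m) = xE p α * psiE p α m := by
  rw [Mdl.X_mul]
  simp only [psiE, Mdl.mk_a, Mdl.mk_b, Mdl.mk_c, Mdl.mk_d]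
  rw [zexp_add (Er1 p α), zexp_one (Er1 p α)]
  group

theorem case_n (m : Mdl p α) : psiE p α (Mdl.N * m) = nE p α * psiE p α m := by
  rw [Mdl.N_mul]
  simp only [psiE, Mdl.mk_a, Mdl.mk_b, Mdl.mk_c, Mdl.mk_d]
  rw [zexp_add (Er4 p α), zexp_one (Er4 p α)]
  simp only [zexp]
  have h1 : (zE p α) ^ m.c.val * nE p α = nE p α * (zE p α) ^ m.c.val :=
    ((commZN p α).pow_left _).eq
  have h2 : (yE p α) ^ m.b.val * nE p α = nE p α * (yE p α) ^ m.b.val :=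
    ((commYN p α).pow_left _).eq
  have h3 : (xE p α) ^ m.a.val * nE p α = nE p α * (xE p α) ^ m.a.val :=
    ((commXN p α).pow_left _).eq
  calc (xE p α) ^ m.a.val * ((yE p α) ^ m.b.val * ((zE p α) ^ m.c.val
        * (nE p α * (nE p α) ^ m.d.val)))
      = (xE p α) ^ m.a.val * ((yE p α) ^ m.b.val * (((zE p α) ^ m.c.val * nE p α)
        * (nE p α) ^ m.d.val)) := by group
    _ = (xE p α) ^ m.a.val * (((yE p α) ^ m.b.val * nE p α) * ((zE p α) ^ m.c.val
        * (nE p α) ^ m.d.val)) := by rw [h1]; group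
    _ = ((xE p α) ^ m.a.val * nE p α) * ((yE p α) ^ m.b.val * ((zE p α) ^ m.c.val
        * (nE p α) ^ m.d.val)) := by rw [h2]; group
    _ = nE p α * ((xE p α) ^ m.a.val * ((yE p α) ^ m.b.val * ((zE p α) ^ m.c.val
        * (nE p α) ^ m.d.val))) := by rw [h3]; group

theorem case_y (m : Mdl p α) : psiE p α (Mdl.Y * m) = yE p α * psiE p α m := by
  rw [Mdl.Y_mul]
  simp only [psiE, Mdl.mk_a, Mdl.mk_b, Mdl.mk_c, Mdl.mk_d]
  rw [zexp_add (Er2 p α), zexp_one (Er2 p α)]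
  have hA : zexp (xE p α) (m.a - Mdl.lp (Mdl.dn m.a)) * yE p α
      = yE p α * zexp (xE p α) m.a := by
    show (xE p α) ^ (m.a - Mdl.lp (Mdl.dn m.a)).val * yE p α = _
    rw [L1]
    congr 1
    refine pow_eq_zexp (Er1 p α) ?_
    push_cast
    rw [ZMod.natCast_val, ZMod.cast_id]
    have e1 := Mdl.lp_dn (p := p) m.a
    have e3 := Mdl.lp_mul_p (p := p) (Mdl.dn m.a)
    linear_combination -e1 - e3
  calc zexp (xE p α) (m.a - Mdl.lp (Mdl.dn m.a)) * ((yE p α * zexp (yE p α) m.b)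
        * ((zE p α) ^ m.c.val * zexp (nE p α) m.d))
      = (zexp (xE p α) (m.a - Mdl.lp (Mdl.dn m.a)) * yE p α)
        * (zexp (yE p α) m.b * ((zE p α) ^ m.c.val * zexp (nE p α) m.d)) := by group
    _ = (yE p α * zexp (xE p α) m.a)
        * (zexp (yE p α) m.b * ((zE p α) ^ m.c.val * zexp (nE p α) m.d)) := by rw [hA]
    _ = yE p α * (zexp (xE p α) m.a
        * (zexp (yE p α) m.b * ((zE p α) ^ m.c.val * zexp (nE p α) m.d))) := by group

end PsiDef

section CaseZ

variable (p α : ℕ) [Fact p.Prime] [Fact (Odd p)]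

theorem case_z (m : Mdl p α) : psiE p α (Mdl.Z * m) = zE p α * psiE p α m := by
  have hx2 := Er1 p α
  have hy2 := Er2 p α
  have hn2 := Er4 p α
  have hdn : Mdl.dn m.a = ((m.a.val : ℕ) : ZMod p) := Mdl.dn_eq_cast m.a
  have hyav : (yE p α) ^ m.a.val = zexp (yE p α) (Mdl.dn m.a) := by
    rw [hdn, zexp_natCast hy2]
  have hnav : (nE p α) ^ m.a.val = zexp (nE p α) (Mdl.dn m.a) := by
    rw [hdn, zexp_natCast hn2]
  have h1 : ((nE p α) ^ m.a.val)⁻¹ * (yE p α) ^ m.b.val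
      = (yE p α) ^ m.b.val * ((nE p α) ^ m.a.val)⁻¹ :=
    ((((commYN p α).symm.pow_left m.a.val).inv_left).pow_right m.b.val).eq
  have h2 : zE p α * (yE p α) ^ m.b.val = (yE p α) ^ m.b.val * zE p α :=
    ((commYZ p α).symm.pow_right m.b.val).eq
  have h3 : ((nE p α) ^ m.a.val)⁻¹ * (zE p α) ^ (1 + m.c.val)
      = (zE p α) ^ (1 + m.c.val) * ((nE p α) ^ m.a.val)⁻¹ :=
    ((((commZN p α).symm.pow_left m.a.val).inv_left).pow_right (1 + m.c.val)).eq
  have hRHS : zE p α * psiE p α m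
      = (xE p α) ^ (fkn p m.a.val) * ((((yE p α) ^ m.a.val)⁻¹ * (yE p α) ^ m.b.val)
        * ((zE p α) ^ (1 + m.c.val) * (((nE p α) ^ m.a.val)⁻¹ * (nE p α) ^ m.d.val))) := by
    simp only [psiE, zexp]
    calc zE p α * ((xE p α) ^ m.a.val * ((yE p α) ^ m.b.val
          * ((zE p α) ^ m.c.val * (nE p α) ^ m.d.val)))
        = (zE p α * (xE p α) ^ m.a.val) * ((yE p α) ^ m.b.val
          * ((zE p α) ^ m.c.val * (nE p α) ^ m.d.val)) := by group
      _ = ((xE p α) ^ (fkn p m.a.val) * (((yE p α) ^ m.a.val)⁻¹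
          * (((nE p α) ^ m.a.val)⁻¹ * zE p α)))
          * ((yE p α) ^ m.b.val * ((zE p α) ^ m.c.val * (nE p α) ^ m.d.val)) := by rw [zxk]
      _ = (xE p α) ^ (fkn p m.a.val) * (((yE p α) ^ m.a.val)⁻¹
          * (((nE p α) ^ m.a.val)⁻¹ * ((zE p α * (yE p α) ^ m.b.val)
            * ((zE p α) ^ m.c.val * (nE p α) ^ m.d.val)))) := by group
      _ = (xE p α) ^ (fkn p m.a.val) * (((yE p α) ^ m.a.val)⁻¹
          * (((nE p α) ^ m.a.val)⁻¹ * (((yE p α) ^ m.b.val * zE p α)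
            * ((zE p α) ^ m.c.val * (nE p α) ^ m.d.val)))) := by rw [h2]
      _ = (xE p α) ^ (fkn p m.a.val) * (((yE p α) ^ m.a.val)⁻¹
          * ((((nE p α) ^ m.a.val)⁻¹ * (yE p α) ^ m.b.val)
            * ((zE p α ^ 1 * (zE p α) ^ m.c.val) * (nE p α) ^ m.d.val))) := by
          rw [pow_one]; group
      _ = (xE p α) ^ (fkn p m.a.val) * (((yE p α) ^ m.a.val)⁻¹
          * (((yE p α) ^ m.b.val * ((nE p α) ^ m.a.val)⁻¹)
            * ((zE p α) ^ (1 + m.c.val) * (nE p α) ^ m.d.val))) := by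
          rw [h1, ← pow_add]
      _ = (xE p α) ^ (fkn p m.a.val) * (((yE p α) ^ m.a.val)⁻¹
          * ((yE p α) ^ m.b.val * ((((nE p α) ^ m.a.val)⁻¹ * (zE p α) ^ (1 + m.c.val))
            * (nE p α) ^ m.d.val))) := by group
      _ = (xE p α) ^ (fkn p m.a.val) * (((yE p α) ^ m.a.val)⁻¹
          * ((yE p α) ^ m.b.val * (((zE p α) ^ (1 + m.c.val) * ((nE p α) ^ m.a.val)⁻¹)
            * (nE p α) ^ m.d.val))) := by rw [h3]
      _ = (xE p α) ^ (fkn p m.a.val) * ((((yE p α) ^ m.a.val)⁻¹ * (yE p α) ^ m.b.val)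
          * ((zE p α) ^ (1 + m.c.val) * (((nE p α) ^ m.a.val)⁻¹
            * (nE p α) ^ m.d.val))) := by group
  have hyy : zexp (yE p α) (m.b - Mdl.dn m.a)
      = ((yE p α) ^ m.a.val)⁻¹ * (yE p α) ^ m.b.val := by
    rw [show m.b - Mdl.dn m.a = -(Mdl.dn m.a) + m.b by ring, zexp_add hy2, zexp_neg hy2, ← hyav]
    rfl
  rw [hRHS, Mdl.Z_mul]
  rcases Nat.lt_or_ge (1 + m.c.val) p with hlt | hge
  · -- no carry
    have hcar := Mdl.carry_one_lt (p := p) hlt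
    rw [hcar]
    simp only [Nat.cast_zero, mul_zero, add_zero, psiE, Mdl.mk_a, Mdl.mk_b, Mdl.mk_c, Mdl.mk_d]
    have hx : zexp (xE p α) (m.a + Mdl.lp (Mdl.dn m.a * (Mdl.dn m.a - 1) * (2 : ZMod p)⁻¹))
        = (xE p α) ^ (fkn p m.a.val) := by
      refine (pow_eq_zexp hx2 ?_).symm
      unfold fkn
      push_cast
      rw [ZMod.natCast_val, ZMod.cast_id, Mdl.lp_half]
    have hnn : zexp (nE p α) (m.d - Mdl.dn m.a)
        = ((nE p α) ^ m.a.val)⁻¹ * (nE p α) ^ m.d.val := by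
      rw [show m.d - Mdl.dn m.a = -(Mdl.dn m.a) + m.d by ring, zexp_add hn2, zexp_neg hn2,
        ← hnav]
      rfl
    rw [hx, hyy, hnn, Mdl.one_add_val_lt hlt]
  · -- carry
    have heq : 1 + m.c.val = p := by
      have := ZMod.val_lt m.c
      omega
    have hcar := Mdl.carry_one_eq (p := p) heq
    rw [hcar]
    simp only [Nat.cast_one, mul_one, psiE, Mdl.mk_a, Mdl.mk_b, Mdl.mk_c, Mdl.mk_d]
    have hx' : zexp (xE p α) (m.a + Mdl.lp (Mdl.dn m.a * (Mdl.dn m.a - 1) * (2 : ZMod p)⁻¹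
        + (α : ZMod p)))
        = (xE p α) ^ (fkn p m.a.val) * (xE p α) ^ (α * p) := by
      rw [← pow_add]
      refine (pow_eq_zexp hx2 ?_).symm
      unfold fkn
      push_cast
      rw [ZMod.natCast_val, ZMod.cast_id, Mdl.lp_add, Mdl.lp_half, Mdl.lp_natCast]
      ring
    have hnn' : zexp (nE p α) (m.d - Mdl.dn m.a + 1)
        = nE p α * (((nE p α) ^ m.a.val)⁻¹ * (nE p α) ^ m.d.val) := by
      rw [show m.d - Mdl.dn m.a + 1 = 1 + (-(Mdl.dn m.a) + m.d) by ring, zexp_add hn2,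
        zexp_add hn2, zexp_neg hn2, zexp_one hn2, ← hnav]
      rfl
    have hc1 : (((yE p α) ^ m.a.val)⁻¹ * (yE p α) ^ m.b.val) * (xE p α) ^ (α * p)
        = (xE p α) ^ (α * p) * (((yE p α) ^ m.a.val)⁻¹ * (yE p α) ^ m.b.val) := by
      have hcxy : Commute ((xE p α) ^ (α * p)) (yE p α) := by
        rw [show α * p = p * α by ring, pow_mul]
        exact Commute.pow_left (hxp_y p α) α
      exact ((hcxy.pow_right m.a.val).inv_right.mul_right (hcxy.pow_right m.b.val)).symm.eq
    rw [hx', hyy, hnn', Mdl.one_add_val_eq heq, pow_zero, heq, Er5]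
    have final : (xE p α) ^ (fkn p m.a.val) * ((((yE p α) ^ m.a.val)⁻¹ * (yE p α) ^ m.b.val)
        * (((xE p α) ^ (α * p) * nE p α) * (((nE p α) ^ m.a.val)⁻¹ * (nE p α) ^ m.d.val)))
        = ((xE p α) ^ (fkn p m.a.val) * (xE p α) ^ (α * p))
          * ((((yE p α) ^ m.a.val)⁻¹ * (yE p α) ^ m.b.val)
            * (nE p α * (((nE p α) ^ m.a.val)⁻¹ * (nE p α) ^ m.d.val))) := by
      calc (xE p α) ^ (fkn p m.a.val) * ((((yE p α) ^ m.a.val)⁻¹ * (yE p α) ^ m.b.val)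
            * (((xE p α) ^ (α * p) * nE p α) * (((nE p α) ^ m.a.val)⁻¹ * (nE p α) ^ m.d.val)))
          = (xE p α) ^ (fkn p m.a.val) * (((((yE p α) ^ m.a.val)⁻¹ * (yE p α) ^ m.b.val)
            * (xE p α) ^ (α * p))
            * (nE p α * (((nE p α) ^ m.a.val)⁻¹ * (nE p α) ^ m.d.val))) := by group
        _ = (xE p α) ^ (fkn p m.a.val) * (((xE p α) ^ (α * p)
            * (((yE p α) ^ m.a.val)⁻¹ * (yE p α) ^ m.b.val))
            * (nE p α * (((nE p α) ^ m.a.val)⁻¹ * (nE p α) ^ m.d.val))) := by rw [hc1]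
        _ = ((xE p α) ^ (fkn p m.a.val) * (xE p α) ^ (α * p))
            * ((((yE p α) ^ m.a.val)⁻¹ * (yE p α) ^ m.b.val)
              * (nE p α * (((nE p α) ^ m.a.val)⁻¹ * (nE p α) ^ m.d.val))) := by group
    rw [final]
    group

end CaseZ

section Pi

variable (p α : ℕ) [Fact p.Prime] [Fact (Odd p)]

/-- Images of the generators. -/
def fgen : Fin 4 → Mdl p α := ![Mdl.X, Mdl.Y, Mdl.Z, Mdl.N]

theorem hrels : ∀ r ∈ E3defs.rels p α, FreeGroup.lift (fgen p α) r = 1 := by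
  intro r hr
  simp only [E3defs.rels, Set.mem_insert_iff, Set.mem_singleton_iff] at hr
  rcases hr with rfl | rfl | rfl | rfl | rfl | rfl | rfl | rfl | rfl | rfl | rfl
  · rw [map_pow, FreeGroup.lift_apply_of]
    exact Mdl.X_ord
  · rw [map_pow, FreeGroup.lift_apply_of]
    exact Mdl.Y_ord
  · rw [map_pow, FreeGroup.lift_apply_of]
    exact Mdl.Z_ord
  · rw [map_pow, FreeGroup.lift_apply_of]
    exact Mdl.N_ord
  · rw [map_mul, map_inv, map_mul, map_pow, map_pow, FreeGroup.lift_apply_of, FreeGroup.lift_apply_of,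
      FreeGroup.lift_apply_of]
    exact mul_inv_eq_one.mpr Mdl.Z_p_rel
  · simp only [comm', map_mul, map_inv, FreeGroup.lift_apply_of]
    exact rel_of_comm Mdl.XZ_rel
  · simp only [comm', map_mul, map_inv, map_pow, FreeGroup.lift_apply_of]
    exact rel_of_comm Mdl.XY_rel
  · simp only [comm', map_mul, map_inv, FreeGroup.lift_apply_of]
    exact rel_of_commute Mdl.YZ_comm
  · simp only [comm', map_mul, map_inv, FreeGroup.lift_apply_of]
    exact rel_of_commute Mdl.XN_comm
  · simp only [comm', map_mul, map_inv, FreeGroup.lift_apply_of]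
    exact rel_of_commute Mdl.YN_comm
  · simp only [comm', map_mul, map_inv, FreeGroup.lift_apply_of]
    exact rel_of_commute Mdl.ZN_comm

/-- The canonical morphism `E₃ →* Mdl`. -/
def piE : E3 p α →* Mdl p α := PresentedGroup.toGroup (hrels p α)

theorem piE_x : piE p α (xE p α) = Mdl.X := PresentedGroup.toGroup.of (hrels p α)
theorem piE_y : piE p α (yE p α) = Mdl.Y := PresentedGroup.toGroup.of (hrels p α)
theorem piE_z : piE p α (zE p α) = Mdl.Z := PresentedGroup.toGroup.of (hrels p α)
theorem piE_n : piE p α (nE p α) = Mdl.N := PresentedGroup.toGroup.of (hrels p α)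

theorem psiE_one : psiE p α 1 = 1 := by
  simp [psiE, zexp, Mdl.one_a, Mdl.one_b, Mdl.one_c, Mdl.one_d, ZMod.val_zero]

theorem psi_piE (g : E3 p α) : ∀ m : Mdl p α, psiE p α (piE p α g * m) = g * psiE p α m := by
  have hg : g ∈ Subgroup.closure (Set.range (PresentedGroup.of (rels := E3defs.rels p α))) := by
    rw [PresentedGroup.closure_range_of]
    trivial
  induction hg using Subgroup.closure_induction with
  | mem w hw =>
    obtain ⟨i, rfl⟩ := hw
    fin_cases i
    · show ∀ m, psiE p α (piE p α (xE p α) * m) = xE p α * psiE p α m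
      intro m
      rw [piE_x]
      exact case_x p α m
    · show ∀ m, psiE p α (piE p α (yE p α) * m) = yE p α * psiE p α m
      intro m
      rw [piE_y]
      exact case_y p α m
    · show ∀ m, psiE p α (piE p α (zE p α) * m) = zE p α * psiE p α m
      intro m
      rw [piE_z]
      exact case_z p α m
    · show ∀ m, psiE p α (piE p α (nE p α) * m) = nE p α * psiE p α m
      intro m
      rw [piE_n]
      exact case_n p α m
  | one =>
    intro m
    rw [map_one, one_mul, one_mul]
  | mul u v _ _ ihu ihv =>
    intro m
    rw [map_mul, mul_assoc, ihu, ihv, mul_assoc]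
  | inv u _ ih =>
    intro m
    have h := ih (piE p α u⁻¹ * m)
    rw [map_inv] at h ⊢
    rw [mul_inv_cancel_left] at h
    rw [h, inv_mul_cancel_left]

theorem psiE_piE (g : E3 p α) : psiE p α (piE p α g) = g := by
  have := psi_piE p α g 1
  rwa [mul_one, psiE_one, mul_one] at this

theorem piE_inj : Function.Injective (piE p α) := fun g g' h => by
  rw [← psiE_piE p α g, ← psiE_piE p α g', h]

theorem piE_surj : Function.Surjective (piE p α) := by
  intro m
  refine ⟨xE p α ^ m.a.val * yE p α ^ m.b.val * zE p α ^ m.c.val * nE p α ^ m.d.val, ?_⟩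
  rw [map_mul, map_mul, map_mul, map_pow, map_pow, map_pow, map_pow, piE_x, piE_y, piE_z, piE_n]
  exact (Mdl.decomp m).symm

theorem mem_normalCore' {G : Type*} [Group G] {K : Subgroup G} {g : G} :
    g ∈ K.normalCore ↔ ∀ b : G, b * g * b⁻¹ ∈ K := Iff.rfl

theorem closure_mem_iff (S : Set (E3 p α)) (g : E3 p α) :
    g ∈ Subgroup.closure S ↔ piE p α g ∈ Subgroup.closure ((piE p α) '' S) := by
  rw [← MonoidHom.map_closure]
  constructor
  · exact fun h => Subgroup.mem_map_of_mem _ h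
  · intro h
    rw [Subgroup.mem_map] at h
    obtain ⟨g', hg', hgg⟩ := h
    rwa [piE_inj p α hgg] at hg'

theorem normalCore_mem_iff (S : Set (E3 p α)) (g : E3 p α) :
    g ∈ (Subgroup.closure S).normalCore
      ↔ piE p α g ∈ (Subgroup.closure ((piE p α) '' S)).normalCore := by
  rw [mem_normalCore', mem_normalCore']
  constructor
  · intro h b'
    obtain ⟨b, rfl⟩ := piE_surj p α b'
    have h2 := h b
    rw [closure_mem_iff p α] at h2
    rwa [map_mul, map_mul, map_inv] at h2
  · intro h b
    have h2 := h (piE p α b)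
    rw [closure_mem_iff p α]
    rwa [map_mul, map_mul, map_inv]

theorem image_xy : (piE p α) '' {xE p α, yE p α} = {Mdl.X, Mdl.Y} := by
  rw [Set.image_insert_eq, Set.image_singleton, piE_x, piE_y]

theorem image_yz : (piE p α) '' {yE p α, zE p α} = {Mdl.Y, Mdl.Z} := by
  rw [Set.image_insert_eq, Set.image_singleton, piE_y, piE_z]

theorem image_xpn : (piE p α) '' {(xE p α) ^ p, nE p α} = {Mdl.X ^ p, Mdl.N} := by
  rw [Set.image_insert_eq, Set.image_singleton, map_pow, piE_x, piE_n]

theorem image_xpy : (piE p α) '' {(xE p α) ^ p, yE p α} = {Mdl.X ^ p, Mdl.Y} := by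
  rw [Set.image_insert_eq, Set.image_singleton, map_pow, piE_x, piE_y]

theorem main1 : Subgroup.center (E3 p α) = Subgroup.closure {(xE p α) ^ p, nE p α} := by
  ext g
  constructor
  · intro hg
    have hπ : piE p α g ∈ Subgroup.center (Mdl p α) := by
      rw [Subgroup.mem_center_iff]
      intro h'
      obtain ⟨h, rfl⟩ := piE_surj p α h'
      rw [← map_mul, ← map_mul]
      exact congrArg _ (Subgroup.mem_center_iff.mp hg h)
    rw [Mdl.center_eq] at hπ
    rw [closure_mem_iff p α, image_xpn]
    exact hπ
  · intro hg
    rw [Subgroup.mem_center_iff]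
    intro h
    apply piE_inj p α
    rw [map_mul, map_mul]
    have hπ : piE p α g ∈ Subgroup.center (Mdl p α) := by
      rw [Mdl.center_eq, ← image_xpn, ← closure_mem_iff p α]
      exact hg
    exact Subgroup.mem_center_iff.mp hπ (piE p α h)

theorem main2 : (Subgroup.closure {xE p α, yE p α}).normalCore
    = Subgroup.closure {(xE p α) ^ p, yE p α} := by
  ext g
  rw [normalCore_mem_iff p α, closure_mem_iff p α, image_xy, image_xpy,
    Mdl.closure_XY, Mdl.normalCore_SH, Mdl.closure_XpY]

theorem main3 : (Subgroup.closure {xE p α, yE p α}).normalCore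
    ⊓ (Subgroup.closure {yE p α, zE p α}).normalCore = ⊥ := by
  rw [Subgroup.eq_bot_iff_forall]
  intro g hg
  obtain ⟨h1, h2⟩ := Subgroup.mem_inf.mp hg
  rw [normalCore_mem_iff p α, image_xy] at h1
  rw [normalCore_mem_iff p α, image_yz] at h2
  have hbot : piE p α g ∈ ((Subgroup.closure ({Mdl.X, Mdl.Y} : Set (Mdl p α))).normalCore
      ⊓ (Subgroup.closure ({Mdl.Y, Mdl.Z} : Set (Mdl p α))).normalCore) :=
    Subgroup.mem_inf.mpr ⟨h1, h2⟩
  rw [Mdl.cores_inf_eq_bot, Subgroup.mem_bot] at hbot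
  apply piE_inj p α
  rw [hbot, map_one]

end Pi

end E3proof

/-- For `E₃`: the center is `⟨x^p, n⟩`, `core(⟨x,y⟩) = ⟨x^p, y⟩`, and the cores of
`⟨x,y⟩` and `⟨y,z⟩` intersect trivially. -/
theorem E3_center_and_cores (p α : ℕ) (hp : p.Prime) (hodd : Odd p)
    (hα : ¬ IsSquare (α : ZMod p)) :
    Subgroup.center (E3 p α) = Subgroup.closure {(xE p α) ^ p, nE p α} ∧
    (Subgroup.closure {xE p α, yE p α}).normalCore =
      Subgroup.closure {(xE p α) ^ p, yE p α} ∧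
    (Subgroup.closure {xE p α, yE p α}).normalCore ⊓
      (Subgroup.closure {yE p α, zE p α}).normalCore = ⊥ := by
  haveI : Fact p.Prime := ⟨hp⟩
  haveI : Fact (Odd p) := ⟨hodd⟩
  exact ⟨E3proof.main1 p α, E3proof.main2 p α, E3proof.main3 p α⟩
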